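/- arXiv:1903.11990 — 5 statements merged into one kernel-verified Lean document; each statement's English description precedes it below -/
import Mathlib

section
/- Let Z be a measurable space, μ a probability measure on Z, and n ≥ 1. Let W be a measurable space of parameters and let A be a Markov kernel from Z^n to W (a randomized learning algorithm). Let ℓ : W × Z → ℝ be a bounded measurable loss. Define the expected risk R[w] = ∫ ℓ(w,z) dμ(z) and, for a sample S = (z_1,…,z_n) ∈ Z^n, the empirical risk R_S[w] = (1/n) Σ_{i=1}^n ℓ(w, z_i). Suppose A is ε-uniformly stable, i.e., for every pair of samples S, S' ∈ Z^n that differ in at most one coordinate and every z ∈ Z, ∫ ℓ(w,z) d(A S)(w) − ∫ ℓ(w,z) d(A S')(w) ≤ ε. Then the expected generalization error satisfies |E_{S ∼ μ^{⊗n}} [ ∫ (R_S[w] − R[w]) d(A S)(w) ]| ≤ ε. -/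
open MeasureTheory ProbabilityTheory

lemma integrable_of_abs_le' {α : Type*} [MeasurableSpace α] {ρ : Measure α}
    [IsFiniteMeasure ρ] {f : α → ℝ} {C : ℝ}
    (hf : AEStronglyMeasurable f ρ) (h : ∀ x, |f x| ≤ C) : Integrable f ρ :=
  ⟨hf, HasFiniteIntegral.of_bounded (C := C) (Filter.Eventually.of_forall h)⟩

lemma abs_integral_le_of_abs_le' {α : Type*} [MeasurableSpace α] {ρ : Measure α}
    [IsProbabilityMeasure ρ] {f : α → ℝ} {C : ℝ} (h : ∀ x, |f x| ≤ C) :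
    |∫ x, f x ∂ρ| ≤ C := by
  have := norm_integral_le_of_norm_le_const (μ := ρ) (f := f) (C := C)
    (Filter.Eventually.of_forall h)
  simpa using this

lemma resample' {Z : Type*} [MeasurableSpace Z] (μ : Measure Z) [IsProbabilityMeasure μ]
    {n : ℕ} (i : Fin n) (H : (Fin n → Z) → ℝ) (hH : StronglyMeasurable H)
    (C : ℝ) (hbd : ∀ S, |H S| ≤ C) :
    ∫ S, H S ∂(Measure.pi fun _ : Fin n => μ)
      = ∫ S, ∫ z, H (Function.update S i z) ∂μ ∂(Measure.pi fun _ : Fin n => μ) := by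
  cases n with
  | zero => exact i.elim0
  | succ m =>
    set ν : Measure (Fin (m+1) → Z) := Measure.pi fun _ => μ with hν
    set ν' : Measure (Fin m → Z) := Measure.pi fun _ => μ with hν'
    let e := MeasurableEquiv.piFinSuccAbove (fun _ : Fin (m+1) => Z) i
    have hmp : MeasurePreserving e ν (μ.prod ν') :=
      measurePreserving_piFinSuccAbove (fun _ => μ) i
    have hupd : ∀ (S : Fin (m+1) → Z) (z : Z),
        Function.update S i z = e.symm (z, (e S).2) := by
      intro S z
      show Function.update S i z = i.insertNth z (i.removeNth S)
      rw [Fin.insertNth_removeNth]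
    have hG : StronglyMeasurable fun p : Z × (Fin m → Z) => H (e.symm p) :=
      hH.comp_measurable e.symm.measurable
    have hint : Integrable (fun p : Z × (Fin m → Z) => H (e.symm p)) (μ.prod ν') :=
      integrable_of_abs_le' hG.aestronglyMeasurable (fun _ => hbd _)
    have hGsm : StronglyMeasurable (fun T : Fin m → Z => ∫ z, H (e.symm (z, T)) ∂μ) := by
      exact MeasureTheory.StronglyMeasurable.integral_prod_right'
        (f := fun q : (Fin m → Z) × Z => H (e.symm (q.2, q.1)))
        (hH.comp_measurable (e.symm.measurable.comp (measurable_snd.prodMk measurable_fst)))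
    have hGbd : ∀ T, |∫ z, H (e.symm (z, T)) ∂μ| ≤ C :=
      fun T => abs_integral_le_of_abs_le' (fun z => hbd _)
    have lhs : ∫ S, H S ∂ν = ∫ T, ∫ x, H (e.symm (x, T)) ∂μ ∂ν' := by
      calc ∫ S, H S ∂ν = ∫ p, H (e.symm p) ∂(μ.prod ν') := by
            rw [← hmp.map_eq, MeasureTheory.integral_map_equiv]
            simp
        _ = ∫ x, ∫ T, H (e.symm (x, T)) ∂ν' ∂μ := integral_prod _ hint
        _ = ∫ T, ∫ x, H (e.symm (x, T)) ∂μ ∂ν' := integral_integral_swap hint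
    have rhs : ∫ S, ∫ z, H (Function.update S i z) ∂μ ∂ν
        = ∫ T, ∫ x, H (e.symm (x, T)) ∂μ ∂ν' := by
      have h0 : ∀ S, ∫ z, H (Function.update S i z) ∂μ
          = (fun T => ∫ z, H (e.symm (z, T)) ∂μ) ((e S).2) := by
        intro S
        simp only []
        congr 1 with z
        rw [hupd S z]
      calc ∫ S, ∫ z, H (Function.update S i z) ∂μ ∂ν
          = ∫ S, (fun T => ∫ z, H (e.symm (z, T)) ∂μ) ((e S).2) ∂ν := by
            exact integral_congr_ae (Filter.Eventually.of_forall h0)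
        _ = ∫ p : Z × (Fin m → Z), (fun T => ∫ z, H (e.symm (z, T)) ∂μ) p.2 ∂(μ.prod ν') := by
            rw [← hmp.map_eq, MeasureTheory.integral_map_equiv]
        _ = ∫ x, ∫ T, ∫ z, H (e.symm (z, T)) ∂μ ∂ν' ∂μ := by
            exact integral_prod _ (integrable_of_abs_le'
              ((hGsm.comp_measurable measurable_snd).aestronglyMeasurable) (fun p => hGbd p.2))
        _ = ∫ T, ∫ x, H (e.symm (x, T)) ∂μ ∂ν' := by
            simp [measure_univ]
    rw [lhs, rhs]

/-- **Uniform stability implies generalization in expectation.**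
If a randomized learning algorithm, modeled as a Markov kernel `A` from samples
`Fin n → Z` to parameters `W`, is `ε`-uniformly stable for a bounded measurable
loss `ℓ`, then the expected generalization error (expectation over the sample
`S ∼ μ^⊗n` and over the randomness of the algorithm of the difference between
empirical risk and expected risk) is bounded in absolute value by `ε`. -/
theorem stability_implies_generalization
    {Z W : Type*} [MeasurableSpace Z] [MeasurableSpace W]
    (μ : Measure Z) [IsProbabilityMeasure μ] (n : ℕ) (hn : 1 ≤ n)
    (A : Kernel (Fin n → Z) W) [IsMarkovKernel A]
    (ℓ : W → Z → ℝ) (hmeas : Measurable (Function.uncurry ℓ))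
    (C : ℝ) (hbdd : ∀ w z, |ℓ w z| ≤ C)
    (ε : ℝ)
    (hstable : ∀ S S' : Fin n → Z,
      (∃ i : Fin n, ∀ j : Fin n, j ≠ i → S j = S' j) →
      ∀ z : Z, ∫ w, ℓ w z ∂(A S) - ∫ w, ℓ w z ∂(A S') ≤ ε) :
    |∫ S, (∫ w, ((1 / (n : ℝ)) * ∑ i : Fin n, ℓ w (S i) - ∫ z, ℓ w z ∂μ) ∂(A S))
        ∂(Measure.pi fun _ : Fin n => μ)| ≤ ε := by
  classical
  have hZ : Nonempty Z := μ.nonempty_of_neZero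
  set ν : Measure (Fin n → Z) := Measure.pi fun _ : Fin n => μ with hνdef
  set F : (Fin n → Z) → Z → ℝ := fun S z => ∫ w, ℓ w z ∂(A S) with hFdef
  -- measurability of F jointly
  have hFsm : StronglyMeasurable (fun p : (Fin n → Z) × Z => F p.1 p.2) := by
    have : (fun p : (Fin n → Z) × Z => F p.1 p.2)
        = fun p => ∫ w, ℓ w p.2 ∂((A.prodMkRight Z) p) := rfl
    rw [this]
    exact MeasureTheory.StronglyMeasurable.integral_kernel_prod_right'
      (κ := A.prodMkRight Z)
      (f := fun q : ((Fin n → Z) × Z) × W => ℓ q.2 q.1.2)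
      (hmeas.comp (measurable_snd.prodMk (measurable_snd.comp measurable_fst))).stronglyMeasurable
  have hFbd : ∀ S z, |F S z| ≤ C := fun S z => abs_integral_le_of_abs_le' (fun w => hbdd w z)
  have hn0 : (n : ℝ) ≠ 0 := Nat.cast_ne_zero.2 (Nat.one_le_iff_ne_zero.1 hn)
  have hε : 0 ≤ ε := by
    have := hstable (fun _ => Classical.arbitrary Z) (fun _ => Classical.arbitrary Z)
      ⟨⟨0, hn⟩, fun _ _ => rfl⟩ (Classical.arbitrary Z)
    simpa using this
  -- pointwise stability bound
  have hdiff : ∀ (i : Fin n) (S : Fin n → Z) (z : Z),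
      |F (Function.update S i z) z - F S z| ≤ ε := by
    intro i S z
    rw [abs_le]
    constructor
    · have := hstable S (Function.update S i z)
        ⟨i, fun j hj => (Function.update_of_ne hj z S).symm⟩ z
      linarith
    · exact hstable (Function.update S i z) S
        ⟨i, fun j hj => Function.update_of_ne hj z S⟩ z
  -- measurability pieces
  have hmupd : ∀ i : Fin n, Measurable (fun p : (Fin n → Z) × Z => Function.update p.1 i p.2) := by
    intro i
    refine measurable_pi_iff.2 fun j => ?_
    rcases eq_or_ne j i with rfl | hj
    · simpa using measurable_snd
    · simp only [Function.update_of_ne hj]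
      exact (measurable_pi_apply j).comp measurable_fst
  have hHi : ∀ i : Fin n, StronglyMeasurable (fun S : Fin n → Z => F S (S i)) :=
    fun i => hFsm.comp_measurable (measurable_id.prodMk (measurable_pi_apply i))
  have ha_sm : StronglyMeasurable (fun S : Fin n → Z => ∫ z, F S z ∂μ) :=
    hFsm.integral_prod_right'
  have ha_bd : ∀ S, |∫ z, F S z ∂μ| ≤ C := fun S => abs_integral_le_of_abs_le' (hFbd S)
  have hb_sm : ∀ i : Fin n,
      StronglyMeasurable (fun S : Fin n → Z => ∫ z, F (Function.update S i z) z ∂μ) := by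
    intro i
    exact MeasureTheory.StronglyMeasurable.integral_prod_right'
      (f := fun p : (Fin n → Z) × Z => F (Function.update p.1 i p.2) p.2)
      (hFsm.comp_measurable ((hmupd i).prodMk measurable_snd))
  have hb_bd : ∀ (i : Fin n) S, |∫ z, F (Function.update S i z) z ∂μ| ≤ C :=
    fun i S => abs_integral_le_of_abs_le' (fun z => hFbd _ _)
  -- inner-z integrability
  have hz1 : ∀ (i : Fin n) (S : Fin n → Z),
      Integrable (fun z => F (Function.update S i z) z) μ := by
    intro i S
    refine integrable_of_abs_le' ?_ (fun z => hFbd _ _)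
    exact ((hFsm.comp_measurable (((hmupd i).comp
      (measurable_const.prodMk measurable_id)).prodMk measurable_id))).aestronglyMeasurable
  have hz2 : ∀ S : Fin n → Z, Integrable (fun z => F S z) μ := by
    intro S
    refine integrable_of_abs_le' ?_ (hFbd S)
    exact (hFsm.comp_measurable (measurable_const.prodMk measurable_id)).aestronglyMeasurable
  -- key exchange identity
  have hkey : ∀ i : Fin n,
      ∫ S, F S (S i) ∂ν - ∫ S, ∫ z, F S z ∂μ ∂ν
        = ∫ S, ∫ z, (F (Function.update S i z) z - F S z) ∂μ ∂ν := by
    intro i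
    have h1 : ∫ S, F S (S i) ∂ν = ∫ S, ∫ z, F (Function.update S i z) z ∂μ ∂ν := by
      have h := resample' μ i (fun S => F S (S i)) (hHi i) C (fun S => hFbd _ _)
      rw [h]
      refine integral_congr_ae (Filter.Eventually.of_forall fun S => ?_)
      refine integral_congr_ae (Filter.Eventually.of_forall fun z => ?_)
      simp only [Function.update_self]
    rw [h1, ← integral_sub
      (integrable_of_abs_le' (hb_sm i).aestronglyMeasurable (hb_bd i))
      (integrable_of_abs_le' ha_sm.aestronglyMeasurable ha_bd)]
    refine integral_congr_ae (Filter.Eventually.of_forall fun S => ?_)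
    exact (integral_sub (hz1 i S) (hz2 S)).symm
  have hDbd : ∀ i : Fin n,
      |∫ S, ∫ z, (F (Function.update S i z) z - F S z) ∂μ ∂ν| ≤ ε :=
    fun i => abs_integral_le_of_abs_le'
      (fun S => abs_integral_le_of_abs_le' (fun z => hdiff i S z))
  -- step 1: pointwise simplification of the inner integral over W
  have step1 : ∀ S : Fin n → Z,
      (∫ w, ((1 / (n : ℝ)) * ∑ i : Fin n, ℓ w (S i) - ∫ z, ℓ w z ∂μ) ∂(A S))
        = (1 / (n : ℝ)) * ∑ i : Fin n, F S (S i) - ∫ z, F S z ∂μ := by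
    intro S
    have hwint : ∀ z : Z, Integrable (fun w => ℓ w z) (A S) := by
      intro z
      refine integrable_of_abs_le' ?_ (fun w => hbdd w z)
      exact (hmeas.comp (measurable_id.prodMk measurable_const)).aestronglyMeasurable
    have hsum : Integrable (fun w => (1 / (n : ℝ)) * ∑ i : Fin n, ℓ w (S i)) (A S) :=
      (integrable_finset_sum _ fun i _ => hwint (S i)).const_mul _
    have hRmeas : StronglyMeasurable (fun w : W => ∫ z, ℓ w z ∂μ) :=
      MeasureTheory.StronglyMeasurable.integral_prod_right'
        (f := fun q : W × Z => ℓ q.1 q.2) hmeas.stronglyMeasurable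
    have hR : Integrable (fun w => ∫ z, ℓ w z ∂μ) (A S) :=
      integrable_of_abs_le' hRmeas.aestronglyMeasurable
        (fun w => abs_integral_le_of_abs_le' (fun z => hbdd w z))
    rw [integral_sub hsum hR, integral_const_mul,
      integral_finset_sum _ (fun i _ => hwint (S i))]
    congr 1
    exact integral_integral_swap (integrable_of_abs_le'
      hmeas.aestronglyMeasurable (fun p => hbdd p.1 p.2))
  -- rewrite the goal
  have hint_sum : Integrable (fun S => (1 / (n : ℝ)) * ∑ i : Fin n, F S (S i)) ν :=
    (integrable_finset_sum _ fun i _ =>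
      integrable_of_abs_le' (hHi i).aestronglyMeasurable (fun S => hFbd _ _)).const_mul _
  have hint_a : Integrable (fun S => ∫ z, F S z ∂μ) ν :=
    integrable_of_abs_le' ha_sm.aestronglyMeasurable ha_bd
  calc |∫ S, (∫ w, ((1 / (n : ℝ)) * ∑ i : Fin n, ℓ w (S i) - ∫ z, ℓ w z ∂μ) ∂(A S)) ∂ν|
      = |∫ S, ((1 / (n : ℝ)) * ∑ i : Fin n, F S (S i) - ∫ z, F S z ∂μ) ∂ν| := by
        rw [integral_congr_ae (Filter.Eventually.of_forall step1)]
    _ = |(1 / (n : ℝ)) * ∑ i : Fin n,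
          (∫ S, F S (S i) ∂ν - ∫ S, ∫ z, F S z ∂μ ∂ν)| := by
        rw [integral_sub hint_sum hint_a, integral_const_mul,
          integral_finset_sum _ (fun i _ =>
            integrable_of_abs_le' (hHi i).aestronglyMeasurable (fun S => hFbd _ _)),
          Finset.sum_sub_distrib, mul_sub]
        congr 1
        rw [Finset.sum_const, Finset.card_univ, Fintype.card_fin, nsmul_eq_mul]
        field_simp
    _ ≤ (1 / (n : ℝ)) * ∑ i : Fin n, ε := by
        rw [abs_mul, abs_of_nonneg (by positivity : (0:ℝ) ≤ 1 / (n:ℝ))]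
        gcongr
        calc |∑ i : Fin n, (∫ S, F S (S i) ∂ν - ∫ S, ∫ z, F S z ∂μ ∂ν)|
            ≤ ∑ i : Fin n, |∫ S, F S (S i) ∂ν - ∫ S, ∫ z, F S z ∂μ ∂ν| :=
              Finset.abs_sum_le_sum_abs _ _
          _ ≤ ∑ i : Fin n, ε := by
              refine Finset.sum_le_sum fun i _ => ?_
              rw [hkey i]
              exact hDbd i
    _ = ε := by
        rw [Finset.sum_const, Finset.card_univ, Fintype.card_fin, nsmul_eq_mul]
        field_simp
end

section
/- Let Z be a set, n ≥ 2, T ≥ 1, and let ℓ : ℝ^d × Z → ℝ be a loss taking values in [0,1] such that for every z ∈ Z the map w ↦ ℓ(w,z) is L-Lipschitz, differentiable, and β-smooth (its gradient is β-Lipschitz). Let S = (z_1,…,z_n) and S' = (z'_1,…,z'_n) be two samples in Z^n differing in exactly one coordinate. Fix an initial point w_0 ∈ ℝ^d and step sizes μ_1 ≥ μ_2 ≥ … ≥ μ_T > 0 with μ_t ≤ c/t for a constant c > 0. For an index sequence I = (i_1,…,i_T) ∈ {1,…,n}^T, define SGD iterates on S by w_{t}(S,I) = w_{t-1}(S,I)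 − μ_t ∇_w ℓ(w_{t-1}(S,I), z_{i_t}), and analogously w_t(S',I) on S', both started at w_0. Then for every z ∈ Z, the average over all index sequences satisfies (1/n^T) Σ_{I ∈ {1,…,n}^T} [ ℓ(w_T(S,I), z) − ℓ(w_T(S',I), z) ] ≤ ((1 + 1/(βc))/(n−1)) · (2cL²)^{1/(βc+1)} · T^{βc/(βc+1)}. -/
/-!
Couple the two SGD runs through the same index sequence `I`, and let `i` be the index where
`S` and `S'` differ. Until `I` first selects `i` the iterates coincide. After that, a step on a
common example expands their distance by at most `1 + β μ` (the gradient is `β`-Lipschitz) and a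
step on the differing example adds at most `2 L μ` (the gradient is bounded by `L`). By the
discrete Grönwall inequality, if `i` is not selected before step `k` then the loss difference is
at most `∑_{t ≥ k, I t = i} C t` with `C t = 2 L² μ_{t+1} ∏_{s > t} (1 + β μ_{s+1})`; otherwise
it is at most `1`. Every step selects `i` for a fraction `1/n` of the index sequences, so the
average is at most `(k + ∑_{t ≥ k} C t) / n`. With `γ = β c`, the bound `μ_t ≤ c / t` gives
`C t ≤ θ^{γ+1} (t+1)^{-(γ+1)}` where `θ^{γ+1} = 2 c L² T^γ`, and comparing the tail with
`∫ x^{-(γ+1)}` for the cutoff `k = ⌊θ⌋` yields `k + ∑_{t ≥ k} C t ≤ θ (1 + 1/γ)`.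
-/

open Finset Real

namespace Real

theorem one_add_mul_one_sub_inv_le_rpow {x γ : ℝ} (hx : 0 < x) (hγ : 0 ≤ γ) :
    1 + γ * (1 - x⁻¹) ≤ x ^ γ := by
  calc 1 + γ * (1 - x⁻¹) ≤ log x * γ + 1 := by
        nlinarith [one_sub_inv_le_log_of_pos hx]
    _ ≤ x ^ γ := by rw [rpow_def_of_pos hx]; exact add_one_le_exp _

theorem prod_Ico_one_add_div_le_rpow {γ : ℝ} (hγ : 0 ≤ γ) {a b : ℕ} (ha : 1 ≤ a) (hab : a ≤ b) :
    ∏ s ∈ Ico a b, (1 + γ / ((s : ℝ) + 1)) ≤ ((b : ℝ) / a) ^ γ := by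
  induction b, hab using Nat.le_induction with
  | base => simp [div_self (show (a : ℝ) ≠ 0 by positivity)]
  | succ b hab ih =>
    have hb : (0 : ℝ) < b := by exact_mod_cast ha.trans hab
    have hstep : 1 + γ / ((b : ℝ) + 1) ≤ (((b : ℝ) + 1) / b) ^ γ := by
      convert one_add_mul_one_sub_inv_le_rpow (x := ((b : ℝ) + 1) / b) (by positivity) hγ
        using 2
      field_simp; ring
    rw [prod_Ico_succ_top hab]
    calc (∏ s ∈ Ico a b, (1 + γ / ((s : ℝ) + 1))) * (1 + γ / ((b : ℝ) + 1))
        ≤ ((b : ℝ) / a) ^ γ * (((b : ℝ) + 1) / b) ^ γ := by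
          gcongr
      _ = (((b + 1 : ℕ) : ℝ) / a) ^ γ := by
          rw [← mul_rpow (by positivity) (by positivity)]
          push_cast; congr 1; field_simp

theorem sub_mul_rpow_neg_le {γ a b : ℝ} (hγ : 0 < γ) (ha : 0 < a) (hab : a ≤ b) :
    (b - a) * b ^ (-(γ + 1)) ≤ (a ^ (-γ) - b ^ (-γ)) / γ := by
  have hb : 0 < b := ha.trans_le hab
  have key := one_add_mul_one_sub_inv_le_rpow (x := b / a) (by positivity) hγ.le
  have hba : (b / a) ^ γ * b ^ (-γ) = a ^ (-γ) := by
    rw [div_rpow hb.le ha.le, rpow_neg hb.le, rpow_neg ha.le]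
    field_simp
  have hbq : b ^ (-(γ + 1)) = b ^ (-γ) / b := by
    rw [neg_add, rpow_add hb, rpow_neg_one, div_eq_mul_inv]
  have hpos : 0 < b ^ (-γ) := rpow_pos_of_pos hb _
  rw [le_div_iff₀ hγ, hbq, ← hba]
  calc (b - a) * (b ^ (-γ) / b) * γ = b ^ (-γ) * (γ * (1 - b⁻¹ * a)) := by field_simp
    _ ≤ b ^ (-γ) * ((b / a) ^ γ - 1) := by
        gcongr
        rw [inv_div, div_eq_inv_mul] at key
        linarith
    _ = _ := by ring

theorem sum_Ico_rpow_neg_le {γ : ℝ} (hγ : 0 < γ) {a b : ℕ} (ha : 1 ≤ a) (hab : a ≤ b) :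
    ∑ t ∈ Ico a b, ((t : ℝ) + 1) ^ (-(γ + 1)) ≤ ((a : ℝ) ^ (-γ) - (b : ℝ) ^ (-γ)) / γ := by
  calc ∑ t ∈ Ico a b, ((t : ℝ) + 1) ^ (-(γ + 1))
      ≤ ∑ t ∈ Ico a b, ((t : ℝ) ^ (-γ) - ((t + 1 : ℕ) : ℝ) ^ (-γ)) / γ := by
        refine sum_le_sum fun t ht => ?_
        have ht : (0 : ℝ) < t := by exact_mod_cast ha.trans (mem_Ico.1 ht).1
        simpa using sub_mul_rpow_neg_le hγ ht (le_add_of_nonneg_right zero_le_one)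
    _ = _ := by
        rw [← sum_div, ← neg_sub ((b : ℝ) ^ (-γ)),
          ← sum_Ico_sub (fun t : ℕ => (t : ℝ) ^ (-γ)) hab, ← sum_neg_distrib]
        simp only [neg_sub]

end Real

theorem rpow_mul_sum_Ico_rpow_neg_le {γ θ : ℝ} (hγ : 0 < γ) (hθ : 0 < θ) {k : ℕ}
    (hkθ : k ≤ θ) (hθk : θ ≤ k + 1) (T : ℕ) :
    θ ^ (γ + 1) * ∑ t ∈ Ico k T, ((t : ℝ) + 1) ^ (-(γ + 1)) ≤ θ - k + θ / γ := by
  rcases le_or_gt T k with hTk | hkT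
  · rw [Ico_eq_empty_of_le hTk, sum_empty, mul_zero]
    linarith [div_pos hθ hγ]
  have hk : (0 : ℝ) < k + 1 := by positivity
  -- Split the first term `(k + 1)^{-(γ+1)}` with weights `k + 1 - θ` and `θ - k`; the first
  -- part continues the integral comparison of the tail down to `θ`.
  have hhead := sub_mul_rpow_neg_le hγ hθ hθk
  have hrest : ∑ t ∈ Ico (k + 1) T, ((t : ℝ) + 1) ^ (-(γ + 1)) ≤
      (((k : ℝ) + 1) ^ (-γ) - (T : ℝ) ^ (-γ)) / γ := by
    simpa using sum_Ico_rpow_neg_le hγ (Nat.le_add_left 1 k) hkT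
  have hT : 0 ≤ (T : ℝ) ^ (-γ) / γ := by positivity
  have hsum : ∑ t ∈ Ico k T, ((t : ℝ) + 1) ^ (-(γ + 1)) ≤
      (θ - k) * ((k : ℝ) + 1) ^ (-(γ + 1)) + θ ^ (-γ) / γ := by
    rw [sub_div] at hhead hrest
    rw [sum_eq_sum_Ico_succ_bot hkT]
    linarith
  have hθθ : θ ^ (γ + 1) * θ ^ (-γ) = θ := by
    rw [← rpow_add hθ, add_neg_cancel_comm, rpow_one]
  have hratio : θ ^ (γ + 1) * ((k : ℝ) + 1) ^ (-(γ + 1)) ≤ 1 := by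
    rw [rpow_neg hk.le, ← div_eq_mul_inv, ← div_rpow hθ.le hk.le]
    exact rpow_le_one (by positivity) ((div_le_one hk).2 hθk) (by positivity)
  calc θ ^ (γ + 1) * ∑ t ∈ Ico k T, ((t : ℝ) + 1) ^ (-(γ + 1))
      ≤ θ ^ (γ + 1) * ((θ - k) * ((k : ℝ) + 1) ^ (-(γ + 1)) + θ ^ (-γ) / γ) := by gcongr
    _ = (θ - k) * (θ ^ (γ + 1) * ((k : ℝ) + 1) ^ (-(γ + 1))) +
          θ ^ (γ + 1) * θ ^ (-γ) / γ := by ring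
    _ ≤ (θ - k) * 1 + θ / γ := by
        rw [hθθ]; gcongr
    _ = θ - k + θ / γ := by ring

theorem cutoff_add_rpow_mul_sum_le {γ θ : ℝ} (hγ : 0 < γ) (hθ : 0 ≤ θ) (T : ℕ) :
    (min ⌊θ⌋₊ T : ℕ) + θ ^ (γ + 1) * ∑ t ∈ Ico (min ⌊θ⌋₊ T) T, ((t : ℝ) + 1) ^ (-(γ + 1)) ≤
      θ * (1 + 1 / γ) := by
  have hθγ : 0 ≤ θ / γ := by positivity
  rcases le_total T ⌊θ⌋₊ with hT | hT
  · rw [min_eq_right hT, Ico_self, sum_empty, mul_zero, add_zero]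
    have : (T : ℝ) ≤ θ := (Nat.cast_le.2 hT).trans (Nat.floor_le hθ)
    linarith [show θ * (1 + 1 / γ) = θ + θ / γ by ring]
  rcases hθ.eq_or_lt with rfl | hθ
  · simp [zero_rpow (by positivity : γ + 1 ≠ 0)]
  rw [min_eq_left hT]
  have := rpow_mul_sum_Ico_rpow_neg_le hγ hθ (Nat.floor_le hθ.le) (Nat.lt_floor_add_one θ).le T
  linarith [show θ * (1 + 1 / γ) = θ + θ / γ by ring]

theorem mul_prod_Ico_one_add_mul_le {β c : ℝ} {μ : ℕ → ℝ} {t T : ℕ} (hβ : 0 ≤ β) (hc : 0 ≤ c)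
    (hμ : ∀ s : ℕ, 1 ≤ s → s ≤ T → 0 ≤ μ s) (hμc : ∀ s : ℕ, 1 ≤ s → s ≤ T → μ s ≤ c / s)
    (ht : t < T) :
    μ (t + 1) * ∏ s ∈ Ico (t + 1) T, (1 + β * μ (s + 1)) ≤
      c * (T : ℝ) ^ (β * c) * ((t : ℝ) + 1) ^ (-(β * c + 1)) := by
  have ht1 : (0 : ℝ) < t + 1 := by positivity
  have hμt : μ (t + 1) ≤ c / ((t : ℝ) + 1) := by exact_mod_cast hμc (t + 1) (by omega) ht
  have hfac : ∀ s ∈ Ico (t + 1) T, 0 ≤ 1 + β * μ (s + 1) := fun s hs => by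
    have := hμ (s + 1) (by omega) (mem_Ico.1 hs).2; positivity
  have hprod : ∏ s ∈ Ico (t + 1) T, (1 + β * μ (s + 1)) ≤ ((T : ℝ) / ((t : ℝ) + 1)) ^ (β * c) :=
    calc ∏ s ∈ Ico (t + 1) T, (1 + β * μ (s + 1))
        ≤ ∏ s ∈ Ico (t + 1) T, (1 + β * c / ((s : ℝ) + 1)) := by
          refine prod_le_prod hfac fun s hs => ?_
          rw [mul_div_assoc]
          gcongr
          exact_mod_cast hμc (s + 1) (by omega) (mem_Ico.1 hs).2
      _ ≤ _ := by
          exact_mod_cast prod_Ico_one_add_div_le_rpow (a := t + 1) (by positivity) (by omega) ht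
  calc μ (t + 1) * ∏ s ∈ Ico (t + 1) T, (1 + β * μ (s + 1))
      ≤ c / ((t : ℝ) + 1) * ((T : ℝ) / ((t : ℝ) + 1)) ^ (β * c) := by
        gcongr
        exact prod_nonneg hfac
    _ = c * (T : ℝ) ^ (β * c) * ((t : ℝ) + 1) ^ (-(β * c + 1)) := by
        rw [div_rpow (by positivity) ht1.le, rpow_neg ht1.le, rpow_add ht1, rpow_one]
        field_simp

theorem discrete_gronwall_prod_Ico {u b c : ℕ → ℝ} {n₀ N : ℕ} (hN : n₀ ≤ N)
    (hu : ∀ n ∈ Ico n₀ N, u (n + 1) ≤ c n * u n + b n) (hc : ∀ n ∈ Ico n₀ N, 0 ≤ c n) :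
    u N ≤ u n₀ * ∏ i ∈ Ico n₀ N, c i + ∑ k ∈ Ico n₀ N, b k * ∏ i ∈ Ico (k + 1) N, c i := by
  -- `discrete_gronwall_prod_general` needs the recursion for every `n ≥ n₀`: extend the data
  -- past `N` by `c = 1` and `b = 0`.
  have key := discrete_gronwall_prod_general (u := fun n => u (min n N))
    (c := fun n => if n < N then c n else 1) (b := fun n => if n < N then b n else 0)
    (fun n hn => by
      rcases lt_or_ge n N with hnN | hnN
      · simpa [hnN, Nat.succ_le_of_lt hnN, hnN.le] using hu n (mem_Ico.2 ⟨hn, hnN⟩)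
      · simp [hnN.not_gt, min_eq_right hnN, min_eq_right (hnN.trans n.le_succ)])
    (fun n hn => by
      rcases lt_or_ge n N with hnN | hnN
      · simpa [hnN] using hc n (mem_Ico.2 ⟨hn, hnN⟩)
      · simp [hnN.not_gt])
    hN
  have hprod : ∀ m ≥ n₀, ∏ i ∈ Ico m N, (if i < N then c i else 1) = ∏ i ∈ Ico m N, c i :=
    fun m _ => prod_congr rfl fun i hi => if_pos (mem_Ico.1 hi).2
  simp only [min_self, min_eq_left hN] at key
  refine key.trans_eq ?_
  rw [hprod n₀ le_rfl]
  congr 1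
  refine sum_congr rfl fun k hk => ?_
  rw [if_pos (mem_Ico.1 hk).2, hprod (k + 1) (by have := (mem_Ico.1 hk).1; omega)]

section GradientStep

variable {F : Type*} [SeminormedAddCommGroup F] [NormedSpace ℝ F]

def gradStep (g : F → F) (μ : ℝ) (x : F) : F := x - μ • g x

theorem norm_gradStep_sub_le_of_lipschitz {g : F → F} {β μ : ℝ}
    (hg : ∀ x y, ‖g x - g y‖ ≤ β * ‖x - y‖) (hμ : 0 ≤ μ) (x y : F) :
    ‖gradStep g μ x - gradStep g μ y‖ ≤ (1 + β * μ) * ‖x - y‖ := by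
  calc ‖gradStep g μ x - gradStep g μ y‖ = ‖(x - y) - μ • (g x - g y)‖ := by
        rw [gradStep, gradStep, smul_sub]; abel_nf
    _ ≤ ‖x - y‖ + μ * ‖g x - g y‖ := by
        grw [norm_sub_le, norm_smul, Real.norm_of_nonneg hμ]
    _ ≤ ‖x - y‖ + μ * (β * ‖x - y‖) := by gcongr; exact hg x y
    _ = (1 + β * μ) * ‖x - y‖ := by ring

theorem norm_gradStep_sub_le_of_norm_le {g h : F → F} {L μ : ℝ} {x y : F}
    (hg : ‖g x‖ ≤ L) (hh : ‖h y‖ ≤ L) (hμ : 0 ≤ μ) :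
    ‖gradStep g μ x - gradStep h μ y‖ ≤ ‖x - y‖ + 2 * L * μ := by
  calc ‖gradStep g μ x - gradStep h μ y‖ = ‖(x - y) - (μ • g x - μ • h y)‖ := by
        rw [gradStep, gradStep]; abel_nf
    _ ≤ ‖x - y‖ + (‖μ • g x‖ + ‖μ • h y‖) := by grw [norm_sub_le, norm_sub_le (μ • g x)]
    _ = ‖x - y‖ + (μ * ‖g x‖ + μ * ‖h y‖) := by rw [norm_smul, norm_smul, Real.norm_of_nonneg hμ]
    _ ≤ ‖x - y‖ + 2 * L * μ := by nlinarith

end GradientStep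

theorem Fintype.sum_ite_apply_eq {ι α : Type*} [Fintype ι] [DecidableEq ι] [Fintype α]
    [DecidableEq α] (t : ι) (x : α) (a : ℝ) :
    ∑ f : ι → α, (if f t = x then a else 0) = (Fintype.card α : ℝ) ^ (Fintype.card ι - 1) * a := by
  rw [sum_ite, sum_const_zero, add_zero, sum_const, nsmul_eq_mul, ← Fintype.piFinset_univ,
    Fintype.card_filter_piFinset_const_eq_of_mem _ _ (mem_univ x)]
  simp

def Selects {n T : ℕ} (I : Fin T → Fin n) (i : Fin n) (t : ℕ) : Prop :=
  ∃ ht : t < T, I ⟨t, ht⟩ = i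

instance {n T : ℕ} (I : Fin T → Fin n) (i : Fin n) (t : ℕ) : Decidable (Selects I i t) :=
  inferInstanceAs (Decidable (∃ ht : t < T, I ⟨t, ht⟩ = i))

theorem one_div_pow_mul_sum_sum_selects {n T : ℕ} (hn : 0 < n) (i : Fin n) {s : Finset ℕ}
    (hs : ∀ t ∈ s, t < T) (a : ℕ → ℝ) :
    1 / (n : ℝ) ^ T * ∑ I : Fin T → Fin n, ∑ t ∈ s, (if Selects I i t then a t else 0) =
      (∑ t ∈ s, a t) / n := by
  rw [sum_comm, mul_sum, sum_div]
  refine sum_congr rfl fun t ht => ?_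
  have hT : T ≠ 0 := by have := hs t ht; omega
  have hsel : ∀ I : Fin T → Fin n, Selects I i t ↔ I ⟨t, hs t ht⟩ = i :=
    fun I => ⟨fun ⟨_, h⟩ => h, fun h => ⟨hs t ht, h⟩⟩
  simp only [hsel]
  rw [Fintype.sum_ite_apply_eq, Fintype.card_fin, Fintype.card_fin, ← pow_sub_one_mul hT]
  field_simp

section SGD

variable {E Z : Type*} [NormedAddCommGroup E] [InnerProductSpace ℝ E] [CompleteSpace E]

theorem norm_gradient_le_of_lipschitz {f : E → ℝ} {L : ℝ} (hL : 0 ≤ L)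
    (hf : ∀ x y, |f x - f y| ≤ L * ‖x - y‖) (x : E) : ‖gradient f x‖ ≤ L := by
  rw [gradient, LinearIsometryEquiv.norm_map]
  exact norm_fderiv_le_of_lip' ℝ hL (Filter.Eventually.of_forall fun y => hf y x)

def IsSGDIterates {n T : ℕ} (ℓ : E → Z → ℝ) (μ : ℕ → ℝ)
    (w : (Fin n → Z) → (Fin T → Fin n) → ℕ → E) : Prop :=
  ∀ (S : Fin n → Z) (I : Fin T → Fin n) (t : ℕ) (ht : t < T),
    w S I (t + 1) = gradStep (gradient fun v => ℓ v (S (I ⟨t, ht⟩))) (μ (t + 1)) (w S I t)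

namespace IsSGDIterates

variable {n T : ℕ} {ℓ : E → Z → ℝ} {μ : ℕ → ℝ} {w : (Fin n → Z) → (Fin T → Fin n) → ℕ → E}
  {S S' : Fin n → Z} {i : Fin n} {I : Fin T → Fin n} {L β : ℝ}

theorem eq_of_forall_not_selects (hw : IsSGDIterates ℓ μ w) (hSS' : ∀ j, j ≠ i → S j = S' j)
    (h0 : w S I 0 = w S' I 0) {k : ℕ} (hk : k ≤ T) (hI : ∀ t < k, ¬ Selects I i t) :
    w S I k = w S' I k := by
  induction k with
  | zero => exact h0
  | succ k ih =>
    have hkT : k < T := hk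
    rw [hw S I k hkT, hw S' I k hkT, ih (Nat.le_of_succ_le hk) fun t ht => hI t (by omega),
      hSS' _ fun h => hI k k.lt_succ_self ⟨hkT, h⟩]

theorem norm_sub_succ_le (hw : IsSGDIterates ℓ μ w) (hL : 0 ≤ L)
    (hlip : ∀ (z : Z) (x y : E), |ℓ x z - ℓ y z| ≤ L * ‖x - y‖) (hβ : 0 ≤ β)
    (hsmooth : ∀ (z : Z) (x y : E),
      ‖gradient (fun v => ℓ v z) x - gradient (fun v => ℓ v z) y‖ ≤ β * ‖x - y‖)
    (hSS' : ∀ j, j ≠ i → S j = S' j) {t : ℕ} (ht : t < T) (hμ : 0 ≤ μ (t + 1)) :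
    ‖w S I (t + 1) - w S' I (t + 1)‖ ≤
      (1 + β * μ (t + 1)) * ‖w S I t - w S' I t‖ +
        if Selects I i t then 2 * L * μ (t + 1) else 0 := by
  rw [hw S I t ht, hw S' I t ht]
  by_cases hsel : Selects I i t
  · rw [if_pos hsel]
    have hgrad := fun z x => norm_gradient_le_of_lipschitz hL (hlip z) x
    calc _ ≤ ‖w S I t - w S' I t‖ + 2 * L * μ (t + 1) :=
          norm_gradStep_sub_le_of_norm_le (hgrad _ _) (hgrad _ _) hμ
      _ ≤ _ := by
          gcongr
          exact le_mul_of_one_le_left (norm_nonneg _) (le_add_of_nonneg_right (mul_nonneg hβ hμ))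
  · rw [if_neg hsel, add_zero, ← hSS' _ fun h => hsel ⟨ht, h⟩]
    exact norm_gradStep_sub_le_of_lipschitz (hsmooth _) hμ _ _

theorem norm_sub_le_sum (hw : IsSGDIterates ℓ μ w) (hL : 0 ≤ L)
    (hlip : ∀ (z : Z) (x y : E), |ℓ x z - ℓ y z| ≤ L * ‖x - y‖) (hβ : 0 ≤ β)
    (hsmooth : ∀ (z : Z) (x y : E),
      ‖gradient (fun v => ℓ v z) x - gradient (fun v => ℓ v z) y‖ ≤ β * ‖x - y‖)
    (hSS' : ∀ j, j ≠ i → S j = S' j) (hμ : ∀ s : ℕ, 1 ≤ s → s ≤ T → 0 ≤ μ s) {k : ℕ}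
    (hk : k ≤ T) (hkI : w S I k = w S' I k) :
    ‖w S I T - w S' I T‖ ≤ ∑ t ∈ Ico k T, (if Selects I i t then 2 * L * μ (t + 1) else 0) *
      ∏ s ∈ Ico (t + 1) T, (1 + β * μ (s + 1)) := by
  have hμ' : ∀ t ∈ Ico k T, 0 ≤ μ (t + 1) := fun t ht => hμ _ (by omega) (mem_Ico.1 ht).2
  simpa [hkI] using discrete_gronwall_prod_Ico (u := fun m => ‖w S I m - w S' I m‖) hk
    (fun t ht => hw.norm_sub_succ_le hL hlip hβ hsmooth hSS' (mem_Ico.1 ht).2 (hμ' t ht))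
    (fun t ht => by have := hμ' t ht; positivity)

theorem loss_sub_le (hw : IsSGDIterates ℓ μ w) (hrange : ∀ x z, ℓ x z ∈ Set.Icc (0 : ℝ) 1)
    (hL : 0 ≤ L) (hlip : ∀ (z : Z) (x y : E), |ℓ x z - ℓ y z| ≤ L * ‖x - y‖) (hβ : 0 ≤ β)
    (hsmooth : ∀ (z : Z) (x y : E),
      ‖gradient (fun v => ℓ v z) x - gradient (fun v => ℓ v z) y‖ ≤ β * ‖x - y‖)
    (hSS' : ∀ j, j ≠ i → S j = S' j) (hμ : ∀ s : ℕ, 1 ≤ s → s ≤ T → 0 ≤ μ s)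
    (h0 : w S I 0 = w S' I 0) {k : ℕ} (hk : k ≤ T) (z : Z) :
    ℓ (w S I T) z - ℓ (w S' I T) z ≤
      ∑ t ∈ range k, (if Selects I i t then 1 else 0) + ∑ t ∈ Ico k T,
        (if Selects I i t then
          2 * L ^ 2 * μ (t + 1) * ∏ s ∈ Ico (t + 1) T, (1 + β * μ (s + 1)) else 0) := by
  have hhead : 0 ≤ ∑ t ∈ range k, (if Selects I i t then (1 : ℝ) else 0) :=
    sum_nonneg fun t _ => by positivity
  have htail : 0 ≤ ∑ t ∈ Ico k T, (if Selects I i t then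
      2 * L ^ 2 * μ (t + 1) * ∏ s ∈ Ico (t + 1) T, (1 + β * μ (s + 1)) else 0) := by
    refine sum_nonneg fun t ht => ?_
    have hμ' : ∀ s ∈ Ico t T, 0 ≤ μ (s + 1) := fun s hs => hμ _ (by omega) (mem_Ico.1 hs).2
    have := hμ' t (mem_Ico.2 ⟨le_rfl, (mem_Ico.1 ht).2⟩)
    have := prod_nonneg fun s hs =>
      (by have := hμ' s (Ico_subset_Ico_left t.le_succ hs); positivity :
        0 ≤ 1 + β * μ (s + 1))
    positivity
  by_cases hhit : ∃ t < k, Selects I i t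
  · obtain ⟨t, htk, hsel⟩ := hhit
    calc ℓ (w S I T) z - ℓ (w S' I T) z ≤ 1 := by
          linarith [(hrange (w S I T) z).2, (hrange (w S' I T) z).1]
      _ = if Selects I i t then 1 else 0 := (if_pos hsel).symm
      _ ≤ ∑ t ∈ range k, (if Selects I i t then 1 else 0) :=
          single_le_sum (f := fun t => if Selects I i t then (1 : ℝ) else 0)
            (fun _ _ => by positivity) (mem_range.2 htk)
      _ ≤ _ := le_add_of_nonneg_right htail
  · push Not at hhit
    have hkI := hw.eq_of_forall_not_selects hSS' h0 hk hhit
    calc ℓ (w S I T) z - ℓ (w S' I T) z ≤ L * ‖w S I T - w S' I T‖ :=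
          (le_abs_self _).trans (hlip z _ _)
      _ ≤ L * ∑ t ∈ Ico k T, (if Selects I i t then 2 * L * μ (t + 1) else 0) *
            ∏ s ∈ Ico (t + 1) T, (1 + β * μ (s + 1)) := by
          gcongr
          exact hw.norm_sub_le_sum hL hlip hβ hsmooth hSS' hμ hk hkI
      _ = _ := by
          rw [mul_sum]
          exact sum_congr rfl fun t _ => by split_ifs <;> ring
      _ ≤ _ := le_add_of_nonneg_left hhead

theorem average_loss_sub_le (hw : IsSGDIterates ℓ μ w)
    (hrange : ∀ x z, ℓ x z ∈ Set.Icc (0 : ℝ) 1) (hL : 0 ≤ L)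
    (hlip : ∀ (z : Z) (x y : E), |ℓ x z - ℓ y z| ≤ L * ‖x - y‖) (hβ : 0 ≤ β)
    (hsmooth : ∀ (z : Z) (x y : E),
      ‖gradient (fun v => ℓ v z) x - gradient (fun v => ℓ v z) y‖ ≤ β * ‖x - y‖)
    (hSS' : ∀ j, j ≠ i → S j = S' j) (hμ : ∀ s : ℕ, 1 ≤ s → s ≤ T → 0 ≤ μ s) (hn : 0 < n)
    (h0 : ∀ I, w S I 0 = w S' I 0) {k : ℕ} (hk : k ≤ T) (z : Z) :
    1 / (n : ℝ) ^ T * ∑ I : Fin T → Fin n, (ℓ (w S I T) z - ℓ (w S' I T) z) ≤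
      (k + ∑ t ∈ Ico k T,
        2 * L ^ 2 * μ (t + 1) * ∏ s ∈ Ico (t + 1) T, (1 + β * μ (s + 1))) / n := by
  calc 1 / (n : ℝ) ^ T * ∑ I : Fin T → Fin n, (ℓ (w S I T) z - ℓ (w S' I T) z)
      ≤ 1 / (n : ℝ) ^ T * ∑ I : Fin T → Fin n,
          (∑ t ∈ range k, (if Selects I i t then 1 else 0) + ∑ t ∈ Ico k T,
            (if Selects I i t then
              2 * L ^ 2 * μ (t + 1) * ∏ s ∈ Ico (t + 1) T, (1 + β * μ (s + 1)) else 0)) := by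
        gcongr with I
        exact hw.loss_sub_le hrange hL hlip hβ hsmooth hSS' hμ (h0 I) hk z
    _ = _ := by
        rw [sum_add_distrib, mul_add, one_div_pow_mul_sum_sum_selects hn i,
          one_div_pow_mul_sum_sum_selects hn i, sum_const, card_range, add_div]
        · simp
        · exact fun t ht => (mem_Ico.1 ht).2
        · exact fun t ht => (mem_range.1 ht).trans_le hk

end IsSGDIterates

end SGD

theorem sgd_uniform_stability_general
    {Z : Type*} (dd n T : ℕ) (hn : 2 ≤ n)
    (ℓ : EuclideanSpace ℝ (Fin dd) → Z → ℝ)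
    (L β c : ℝ) (hL : 0 ≤ L) (hβ : 0 < β) (hc : 0 < c)
    (hrange : ∀ w z, ℓ w z ∈ Set.Icc (0 : ℝ) 1)
    (hlip : ∀ (z : Z) (w w' : EuclideanSpace ℝ (Fin dd)),
      |ℓ w z - ℓ w' z| ≤ L * ‖w - w'‖)
    (hsmooth : ∀ (z : Z) (w w' : EuclideanSpace ℝ (Fin dd)),
      ‖gradient (fun v => ℓ v z) w - gradient (fun v => ℓ v z) w'‖ ≤ β * ‖w - w'‖)
    (S S' : Fin n → Z)
    (hdiffer : ∃ i : Fin n, S i ≠ S' i ∧ ∀ j : Fin n, j ≠ i → S j = S' j)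
    (w₀ : EuclideanSpace ℝ (Fin dd))
    (μstep : ℕ → ℝ)
    (hμpos : ∀ t : ℕ, 1 ≤ t → t ≤ T → 0 < μstep t)
    (hμle : ∀ t : ℕ, 1 ≤ t → t ≤ T → μstep t ≤ c / t)
    -- the SGD iterates on a sample `S''` with index sequence `I`
    (w : (Fin n → Z) → (Fin T → Fin n) → ℕ → EuclideanSpace ℝ (Fin dd))
    (hw0 : ∀ S'' I, w S'' I 0 = w₀)
    (hwrec : ∀ (S'' : Fin n → Z) (I : Fin T → Fin n) (t : ℕ) (ht : t < T),
      w S'' I (t + 1) =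
        w S'' I t - μstep (t + 1) •
          gradient (fun v => ℓ v (S'' (I ⟨t, ht⟩))) (w S'' I t)) :
    ∀ z : Z,
      (1 / (n : ℝ) ^ T) * ∑ I : Fin T → Fin n, (ℓ (w S I T) z - ℓ (w S' I T) z) ≤
        ((1 + 1 / (β * c)) / ((n : ℝ) - 1)) * (2 * c * L ^ 2) ^ ((1 : ℝ) / (β * c + 1)) *
          (T : ℝ) ^ (β * c / (β * c + 1)) := by
  intro z
  obtain ⟨i, -, hSS'⟩ := hdiffer
  have hμ : ∀ t : ℕ, 1 ≤ t → t ≤ T → 0 ≤ μstep t := fun t h1 h2 => (hμpos t h1 h2).le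
  have hn2 : (2 : ℝ) ≤ n := by exact_mod_cast hn
  set γ := β * c
  set θ := (2 * c * L ^ 2 * (T : ℝ) ^ γ) ^ (1 / (γ + 1)) with hθ
  set k := min ⌊θ⌋₊ T
  have hθγ : θ ^ (γ + 1) = 2 * c * L ^ 2 * (T : ℝ) ^ γ := by
    rw [← rpow_mul (by positivity), one_div_mul_cancel (by positivity), rpow_one]
  have hC : ∀ t ∈ Ico k T, 2 * L ^ 2 * μstep (t + 1) *
      ∏ s ∈ Ico (t + 1) T, (1 + β * μstep (s + 1)) ≤ θ ^ (γ + 1) * ((t : ℝ) + 1) ^ (-(γ + 1)) :=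
    fun t ht => calc
      _ = 2 * L ^ 2 * (μstep (t + 1) * ∏ s ∈ Ico (t + 1) T, (1 + β * μstep (s + 1))) := by ring
      _ ≤ 2 * L ^ 2 * (c * (T : ℝ) ^ γ * ((t : ℝ) + 1) ^ (-(γ + 1))) := by
          gcongr 2 * L ^ 2 * ?_
          exact mul_prod_Ico_one_add_mul_le hβ.le hc.le hμ hμle (mem_Ico.1 ht).2
      _ = _ := by rw [hθγ]; ring
  calc 1 / (n : ℝ) ^ T * ∑ I : Fin T → Fin n, (ℓ (w S I T) z - ℓ (w S' I T) z)
      ≤ (k + ∑ t ∈ Ico k T,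
          2 * L ^ 2 * μstep (t + 1) * ∏ s ∈ Ico (t + 1) T, (1 + β * μstep (s + 1))) / n :=
        IsSGDIterates.average_loss_sub_le hwrec hrange hL hlip hβ.le hsmooth hSS' hμ (by omega)
          (fun I => (hw0 S I).trans (hw0 S' I).symm) (min_le_right _ _) z
    _ ≤ (k + θ ^ (γ + 1) * ∑ t ∈ Ico k T, ((t : ℝ) + 1) ^ (-(γ + 1))) / n := by
        rw [mul_sum]; gcongr (_ + ?_) / _; exact sum_le_sum hC
    _ ≤ θ * (1 + 1 / γ) / n := by
        gcongr; exact cutoff_add_rpow_mul_sum_le (mul_pos hβ hc) (by positivity) T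
    _ ≤ θ * (1 + 1 / γ) / ((n : ℝ) - 1) := by gcongr <;> linarith
    _ = _ := by
        rw [hθ, mul_rpow (by positivity : 0 ≤ 2 * c * L ^ 2) (by positivity : (0 : ℝ) ≤ T ^ γ),
          ← rpow_mul (by positivity), mul_one_div]
        ring

/-- **Uniform stability of SGD (Hardt–Recht–Singer), averaged form.**
For a loss `ℓ` with values in `[0,1]`, `L`-Lipschitz and `β`-smooth in the
parameter, two samples `S, S'` differing in exactly one coordinate, and SGD
iterates started at `w₀` with non-increasing step sizes `μ_t ≤ c/t`, the
average over all index sequences `I ∈ {1,…,n}^T` of the loss difference at the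
final iterates is bounded by `((1 + 1/(βc))/(n−1)) (2cL²)^{1/(βc+1)} T^{βc/(βc+1)}`. -/
theorem sgd_uniform_stability
    {Z : Type*} (dd n T : ℕ) (hn : 2 ≤ n) (hT : 1 ≤ T)
    (ℓ : EuclideanSpace ℝ (Fin dd) → Z → ℝ)
    (L β c : ℝ) (hL : 0 ≤ L) (hβ : 0 < β) (hc : 0 < c)
    (hrange : ∀ w z, ℓ w z ∈ Set.Icc (0 : ℝ) 1)
    (hlip : ∀ (z : Z) (w w' : EuclideanSpace ℝ (Fin dd)),
      |ℓ w z - ℓ w' z| ≤ L * ‖w - w'‖)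
    (hdiff : ∀ z : Z, Differentiable ℝ (fun w => ℓ w z))
    (hsmooth : ∀ (z : Z) (w w' : EuclideanSpace ℝ (Fin dd)),
      ‖gradient (fun v => ℓ v z) w - gradient (fun v => ℓ v z) w'‖ ≤ β * ‖w - w'‖)
    (S S' : Fin n → Z)
    (hdiffer : ∃ i : Fin n, S i ≠ S' i ∧ ∀ j : Fin n, j ≠ i → S j = S' j)
    (w₀ : EuclideanSpace ℝ (Fin dd))
    (μstep : ℕ → ℝ)
    (hμpos : ∀ t : ℕ, 1 ≤ t → t ≤ T → 0 < μstep t)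
    (hμmono : ∀ s t : ℕ, 1 ≤ s → s ≤ t → t ≤ T → μstep t ≤ μstep s)
    (hμle : ∀ t : ℕ, 1 ≤ t → t ≤ T → μstep t ≤ c / t)
    -- the SGD iterates on a sample `S''` with index sequence `I`
    (w : (Fin n → Z) → (Fin T → Fin n) → ℕ → EuclideanSpace ℝ (Fin dd))
    (hw0 : ∀ S'' I, w S'' I 0 = w₀)
    (hwrec : ∀ (S'' : Fin n → Z) (I : Fin T → Fin n) (t : ℕ) (ht : t < T),
      w S'' I (t + 1) =
        w S'' I t - μstep (t + 1) •
          gradient (fun v => ℓ v (S'' (I ⟨t, ht⟩))) (w S'' I t)) :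
    ∀ z : Z,
      (1 / (n : ℝ) ^ T) * ∑ I : Fin T → Fin n, (ℓ (w S I T) z - ℓ (w S' I T) z) ≤
        ((1 + 1 / (β * c)) / ((n : ℝ) - 1)) * (2 * c * L ^ 2) ^ ((1 : ℝ) / (β * c + 1)) *
          (T : ℝ) ^ (β * c / (β * c + 1)) :=
  sgd_uniform_stability_general dd n T hn ℓ L β c hL hβ hc hrange hlip hsmooth S S' hdiffer w₀ μstep
    hμpos hμle w hw0 hwrec
end

section
/- Let g : ℝ → ℝ be differentiable on a neighborhood of z and twice differentiable at z, with |g(z)| ≤ X, |g'(z)| ≤ Y, and |g''(z)| ≤ Z, let d ∈ ℝ with |d| ≤ R, and let γ ≥ 0, with X, Y, Z, R ≥ 0. Then the function E(t) = exp(−γ (g(t) − d)²) is twice differentiable at z and |E''(z)| ≤ 2γ·[ (1 + 2γ(X + R)²)·Y² + (X + R)·Z ]. -/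
/-!
Wherever `g` is differentiable, `E' = -2γ (g - d) g' E`; as this holds near `z`, the product rule
at `z` gives `E''(z) = -2γ E(z) [(1 - 2γ (g z - d)²) g'(z)² + (g z - d) g''(z)]`. The bound then
follows from `0 < E ≤ 1`, `|1 - 2γa²| ≤ 1 + 2γa²` and `|g z - d| ≤ X + R`.
-/

open Real Filter Topology

lemma exp_neg_mul_sq_le_one {γ : ℝ} (hγ : 0 ≤ γ) (a : ℝ) : exp (-γ * a ^ 2) ≤ 1 :=
  exp_le_one_iff.mpr (mul_nonpos_of_nonpos_of_nonneg (neg_nonpos.mpr hγ) (sq_nonneg a))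

section GaussianKernel

variable {g : ℝ → ℝ} (γ d : ℝ)

lemma hasDerivAt_exp_neg_mul_sub_sq {g' t : ℝ} (hg : HasDerivAt g g' t) :
    HasDerivAt (fun t => exp (-γ * (g t - d) ^ 2))
      (-2 * γ * (g t - d) * g' * exp (-γ * (g t - d) ^ 2)) t := by
  convert (((hg.sub_const d).fun_pow 2).const_mul (-γ)).exp using 1
  push_cast
  ring

lemma deriv_exp_neg_mul_sub_sq_eventuallyEq {z : ℝ} (hg : ∀ᶠ t in 𝓝 z, DifferentiableAt ℝ g t) :
    deriv (fun t => exp (-γ * (g t - d) ^ 2)) =ᶠ[𝓝 z]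
      fun t => -2 * γ * (g t - d) * deriv g t * exp (-γ * (g t - d) ^ 2) := by
  filter_upwards [hg] with t ht
  exact (hasDerivAt_exp_neg_mul_sub_sq γ d ht.hasDerivAt).deriv

lemma hasDerivAt_deriv_exp_neg_mul_sub_sq {z g'' : ℝ} (hg : ∀ᶠ t in 𝓝 z, DifferentiableAt ℝ g t)
    (hg2 : HasDerivAt (deriv g) g'' z) :
    HasDerivAt (deriv fun t => exp (-γ * (g t - d) ^ 2))
      (-2 * γ * exp (-γ * (g z - d) ^ 2) *
        ((1 - 2 * γ * (g z - d) ^ 2) * deriv g z ^ 2 + (g z - d) * g'')) z := by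
  have hg1 := hg.self_of_nhds.hasDerivAt
  refine HasDerivAt.congr_of_eventuallyEq ?_ (deriv_exp_neg_mul_sub_sq_eventuallyEq γ d hg)
  refine ((((hg1.sub_const d).const_mul (-2 * γ)).fun_mul hg2).fun_mul
    (hasDerivAt_exp_neg_mul_sub_sq γ d hg1)).congr_deriv ?_
  ring

end GaussianKernel

lemma abs_gaussian_second_deriv_le {γ e a b c A B C : ℝ} (hγ : 0 ≤ γ) (he0 : 0 ≤ e)
    (he1 : e ≤ 1) (ha : |a| ≤ A) (hb : |b| ≤ B) (hc : |c| ≤ C) :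
    |-2 * γ * e * ((1 - 2 * γ * a ^ 2) * b ^ 2 + a * c)| ≤
      2 * γ * ((1 + 2 * γ * A ^ 2) * B ^ 2 + A * C) := by
  have ha2 : a ^ 2 ≤ A ^ 2 := sq_le_sq' (abs_le.mp ha).1 (abs_le.mp ha).2
  have hb2 : b ^ 2 ≤ B ^ 2 := sq_le_sq' (abs_le.mp hb).1 (abs_le.mp hb).2
  have hac : |a * c| ≤ A * C := by
    rw [abs_mul]
    exact mul_le_mul ha hc (abs_nonneg c) ((abs_nonneg a).trans ha)
  have hcoef : |1 - 2 * γ * a ^ 2| ≤ 1 + 2 * γ * A ^ 2 := by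
    rw [abs_le]
    constructor <;> nlinarith [sq_nonneg a]
  calc |-2 * γ * e * ((1 - 2 * γ * a ^ 2) * b ^ 2 + a * c)|
      = 2 * γ * e * |(1 - 2 * γ * a ^ 2) * b ^ 2 + a * c| := by
        rw [abs_mul, abs_of_nonpos (by nlinarith)]
        ring
    _ ≤ 2 * γ * 1 * (|1 - 2 * γ * a ^ 2| * b ^ 2 + |a * c|) := by
        gcongr
        refine (abs_add_le _ _).trans ?_
        rw [abs_mul, abs_of_nonneg (sq_nonneg b)]
    _ ≤ 2 * γ * 1 * ((1 + 2 * γ * A ^ 2) * B ^ 2 + A * C) := by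
        gcongr
    _ = 2 * γ * ((1 + 2 * γ * A ^ 2) * B ^ 2 + A * C) := by ring

theorem gaussian_kernel_second_deriv_bound_general (g : ℝ → ℝ) (z d γ X Y Z R : ℝ)
    (hγ : 0 ≤ γ)
    (hg : ∀ᶠ t in nhds z, DifferentiableAt ℝ g t)
    (hg2 : DifferentiableAt ℝ (deriv g) z)
    (hgz : |g z| ≤ X) (hg' : |deriv g z| ≤ Y) (hg'' : |deriv (deriv g) z| ≤ Z)
    (hd : |d| ≤ R) :
    (∀ᶠ t in nhds z, DifferentiableAt ℝ (fun t => Real.exp (-γ * (g t - d) ^ 2)) t) ∧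
      DifferentiableAt ℝ (deriv (fun t => Real.exp (-γ * (g t - d) ^ 2))) z ∧
      |deriv (deriv (fun t => Real.exp (-γ * (g t - d) ^ 2))) z| ≤
        2 * γ * ((1 + 2 * γ * (X + R) ^ 2) * Y ^ 2 + (X + R) * Z) := by
  have hE' := hasDerivAt_deriv_exp_neg_mul_sub_sq γ d hg hg2.hasDerivAt
  refine ⟨hg.mono fun t ht => (hasDerivAt_exp_neg_mul_sub_sq γ d ht.hasDerivAt).differentiableAt,
    hE'.differentiableAt, ?_⟩
  rw [hE'.deriv]
  exact abs_gaussian_second_deriv_le hγ (exp_pos _).le (exp_neg_mul_sq_le_one hγ _)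
    ((abs_sub _ _).trans (add_le_add hgz hd)) hg' hg''

/-- **Second derivative bound for a Gaussian kernel composed with a scalar map.**
If `g` is differentiable on a neighborhood of `z` and twice differentiable at
`z`, with `|g(z)| ≤ X`, `|g'(z)| ≤ Y`, `|g''(z)| ≤ Z`, and `|d| ≤ R`, then
`E(t) = exp(−γ(g(t)−d)²)` is twice differentiable at `z` and
`|E''(z)| ≤ 2γ[(1 + 2γ(X+R)²)Y² + (X+R)Z]`. -/
theorem gaussian_kernel_second_deriv_bound (g : ℝ → ℝ) (z d γ X Y Z R : ℝ)
    (hγ : 0 ≤ γ) (hX : 0 ≤ X) (hY : 0 ≤ Y) (hZ : 0 ≤ Z) (hR : 0 ≤ R)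
    (hg : ∀ᶠ t in nhds z, DifferentiableAt ℝ g t)
    (hg2 : DifferentiableAt ℝ (deriv g) z)
    (hgz : |g z| ≤ X) (hg' : |deriv g z| ≤ Y) (hg'' : |deriv (deriv g) z| ≤ Z)
    (hd : |d| ≤ R) :
    (∀ᶠ t in nhds z, DifferentiableAt ℝ (fun t => Real.exp (-γ * (g t - d) ^ 2)) t) ∧
      DifferentiableAt ℝ (deriv (fun t => Real.exp (-γ * (g t - d) ^ 2))) z ∧
      |deriv (deriv (fun t => Real.exp (-γ * (g t - d) ^ 2))) z| ≤
        2 * γ * ((1 + 2 * γ * (X + R) ^ 2) * Y ^ 2 + (X + R) * Z) :=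
  gaussian_kernel_second_deriv_bound_general g z d γ X Y Z R hγ hg hg2 hgz hg' hg'' hd
end

section
/- Let g : ℝ → ℝ be differentiable on a neighborhood of z and twice differentiable at z, with |g(z)| ≤ X, |g'(z)| ≤ Y, and |g''(z)| ≤ Z, let d_1,…,d_D ∈ ℝ with |d_k| ≤ R for all k, let α_1,…,α_D ∈ ℝ with |α_k| ≤ α for all k, and let γ ≥ 0, with X, Y, Z, R, α ≥ 0. Then the composed KAF output F(t) = Σ_{k=1}^D α_k · exp(−γ (g(t) − d_k)²) is twice differentiable at z and |F''(z)| ≤ 2·D·α·γ·[ (1 + 2γ(X + R)²)·Y² + (X + R)·Z ]. -/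
/-!
Writing `a` for the kernel activation function, `F = a ∘ g` and the second-order chain rule gives
`F''(z) = a''(g z) · g'(z)² + a'(g z) · g''(z)`. Each Gaussian `e(s) = exp(-γ (s - d)²)` satisfies
`e' = -2γ(s - d) e` and `e'' = (4γ²(s - d)² - 2γ) e` with `e ≤ 1`, so on `|s| ≤ X`, `|d| ≤ R`
one has `|e'| ≤ 2γ(X + R)` and `|e''| ≤ 2γ(1 + 2γ(X + R)²)`; summing the `D` terms weighted by
`|α_k| ≤ α` bounds `a'` and `a''`.
-/

open Real Filter Topology

section SecondOrderChainRule

variable {φ φ' g : ℝ → ℝ} {z : ℝ}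

theorem eventually_hasDerivAt_comp (hφ : ∀ s, HasDerivAt φ (φ' s) s)
    (hg : ∀ᶠ t in 𝓝 z, DifferentiableAt ℝ g t) :
    ∀ᶠ t in 𝓝 z, HasDerivAt (φ ∘ g) (φ' (g t) * deriv g t) t :=
  hg.mono fun t ht => (hφ (g t)).comp t ht.hasDerivAt

theorem hasDerivAt_deriv_comp {φ'' : ℝ} (hφ : ∀ s, HasDerivAt φ (φ' s) s)
    (hφ' : HasDerivAt φ' φ'' (g z)) (hg : ∀ᶠ t in 𝓝 z, DifferentiableAt ℝ g t)
    (hg2 : DifferentiableAt ℝ (deriv g) z) :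
    HasDerivAt (deriv (φ ∘ g)) (φ'' * deriv g z ^ 2 + φ' (g z) * deriv (deriv g) z) z := by
  have hderiv : deriv (φ ∘ g) =ᶠ[𝓝 z] fun t => φ' (g t) * deriv g t :=
    (eventually_hasDerivAt_comp hφ hg).mono fun t ht => ht.deriv
  have hprod := (hφ'.comp z hg.self_of_nhds.hasDerivAt).fun_mul hg2.hasDerivAt
  exact (hprod.congr_deriv (by rw [Function.comp_apply]; ring)).congr_of_eventuallyEq hderiv

end SecondOrderChainRule

section Gaussian

variable (γ d s : ℝ)

theorem hasDerivAt_gaussian :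
    HasDerivAt (fun s => exp (-γ * (s - d) ^ 2)) (-2 * γ * (s - d) * exp (-γ * (s - d) ^ 2)) s := by
  have h := ((((hasDerivAt_id' s).sub_const d).fun_pow 2).const_mul (-γ)).exp
  convert h using 1
  push_cast
  ring

theorem hasDerivAt_gaussian_deriv :
    HasDerivAt (fun s => -2 * γ * (s - d) * exp (-γ * (s - d) ^ 2))
      ((4 * γ ^ 2 * (s - d) ^ 2 - 2 * γ) * exp (-γ * (s - d) ^ 2)) s :=
  ((((hasDerivAt_id' s).sub_const d).const_mul (-2 * γ)).fun_mul
    (hasDerivAt_gaussian γ d s)).congr_deriv (by ring)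

variable {γ d s}

theorem gaussian_le_one (hγ : 0 ≤ γ) : exp (-γ * (s - d) ^ 2) ≤ 1 :=
  exp_le_one_iff.mpr (by nlinarith [sq_nonneg (s - d)])

theorem abs_gaussian_deriv_le {M : ℝ} (hγ : 0 ≤ γ) (hsd : |s - d| ≤ M) :
    |-2 * γ * (s - d) * exp (-γ * (s - d) ^ 2)| ≤ 2 * γ * M := by
  rw [abs_mul, abs_of_pos (exp_pos _), abs_mul, abs_mul, abs_neg, abs_two, abs_of_nonneg hγ]
  calc _ ≤ 2 * γ * M * 1 :=
        mul_le_mul (by gcongr) (gaussian_le_one hγ) (exp_pos _).le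
          (by nlinarith [abs_nonneg (s - d)])
    _ = _ := mul_one _

theorem abs_gaussian_deriv2_le {M : ℝ} (hγ : 0 ≤ γ) (hsd : |s - d| ≤ M) :
    |(4 * γ ^ 2 * (s - d) ^ 2 - 2 * γ) * exp (-γ * (s - d) ^ 2)| ≤
      2 * γ * (1 + 2 * γ * M ^ 2) := by
  have hsq : (s - d) ^ 2 ≤ M ^ 2 := sq_le_sq' (abs_le.mp hsd).1 (abs_le.mp hsd).2
  have hpoly : |4 * γ ^ 2 * (s - d) ^ 2 - 2 * γ| ≤ 2 * γ * (1 + 2 * γ * M ^ 2) := by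
    rw [abs_le]; constructor <;> nlinarith [sq_nonneg (s - d), mul_nonneg hγ hγ]
  rw [abs_mul, abs_of_pos (exp_pos _)]
  calc _ ≤ 2 * γ * (1 + 2 * γ * M ^ 2) * 1 :=
        mul_le_mul hpoly (gaussian_le_one hγ) (exp_pos _).le ((abs_nonneg _).trans hpoly)
    _ = _ := mul_one _

end Gaussian

theorem abs_sum_mul_le_card_mul {ι : Type*} [Fintype ι] {a f : ι → ℝ} {α B : ℝ}
    (ha : ∀ k, |a k| ≤ α) (hf : ∀ k, |f k| ≤ B) :
    |∑ k, a k * f k| ≤ Fintype.card ι * α * B := by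
  calc |∑ k, a k * f k| ≤ ∑ k, |a k| * |f k| := by
        simpa only [abs_mul] using Finset.abs_sum_le_sum_abs (fun k => a k * f k) Finset.univ
    _ ≤ ∑ _k : ι, α * B := Finset.sum_le_sum fun k _ =>
        mul_le_mul (ha k) (hf k) (abs_nonneg _) ((abs_nonneg _).trans (ha k))
    _ = Fintype.card ι * α * B := by simp [mul_assoc]

section KernelActivation

variable {ι : Type*} [Fintype ι] (γ : ℝ) (d αc : ι → ℝ)

noncomputable def kaf (s : ℝ) : ℝ :=
  ∑ k, αc k * exp (-γ * (s - d k) ^ 2)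

noncomputable def kafDeriv (s : ℝ) : ℝ :=
  ∑ k, αc k * (-2 * γ * (s - d k) * exp (-γ * (s - d k) ^ 2))

noncomputable def kafDeriv2 (s : ℝ) : ℝ :=
  ∑ k, αc k * ((4 * γ ^ 2 * (s - d k) ^ 2 - 2 * γ) * exp (-γ * (s - d k) ^ 2))

theorem hasDerivAt_kaf (s : ℝ) : HasDerivAt (kaf γ d αc) (kafDeriv γ d αc s) s :=
  HasDerivAt.fun_sum fun k _ => (hasDerivAt_gaussian γ (d k) s).const_mul (αc k)

theorem hasDerivAt_kafDeriv (s : ℝ) : HasDerivAt (kafDeriv γ d αc) (kafDeriv2 γ d αc s) s :=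
  HasDerivAt.fun_sum fun k _ => (hasDerivAt_gaussian_deriv γ (d k) s).const_mul (αc k)

variable {γ d αc} {s X R α : ℝ}

theorem abs_kafDeriv_le (hγ : 0 ≤ γ) (hs : |s| ≤ X) (hd : ∀ k, |d k| ≤ R)
    (hαc : ∀ k, |αc k| ≤ α) :
    |kafDeriv γ d αc s| ≤ Fintype.card ι * α * (2 * γ * (X + R)) :=
  abs_sum_mul_le_card_mul hαc fun k =>
    abs_gaussian_deriv_le hγ ((abs_sub _ _).trans (add_le_add hs (hd k)))

theorem abs_kafDeriv2_le (hγ : 0 ≤ γ) (hs : |s| ≤ X) (hd : ∀ k, |d k| ≤ R)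
    (hαc : ∀ k, |αc k| ≤ α) :
    |kafDeriv2 γ d αc s| ≤ Fintype.card ι * α * (2 * γ * (1 + 2 * γ * (X + R) ^ 2)) :=
  abs_sum_mul_le_card_mul hαc fun k =>
    abs_gaussian_deriv2_le hγ ((abs_sub _ _).trans (add_le_add hs (hd k)))

end KernelActivation

theorem kaf_comp_second_deriv_bound_general (D : ℕ) (g : ℝ → ℝ) (z γ X Y Z R α : ℝ)
    (d αc : Fin D → ℝ)
    (hγ : 0 ≤ γ)
    (hg : ∀ᶠ t in nhds z, DifferentiableAt ℝ g t)
    (hg2 : DifferentiableAt ℝ (deriv g) z)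
    (hgz : |g z| ≤ X) (hg' : |deriv g z| ≤ Y) (hg'' : |deriv (deriv g) z| ≤ Z)
    (hd : ∀ k, |d k| ≤ R) (hαc : ∀ k, |αc k| ≤ α) :
    (∀ᶠ t in nhds z, DifferentiableAt ℝ
        (fun t => ∑ k : Fin D, αc k * Real.exp (-γ * (g t - d k) ^ 2)) t) ∧
      DifferentiableAt ℝ
        (deriv (fun t => ∑ k : Fin D, αc k * Real.exp (-γ * (g t - d k) ^ 2))) z ∧
      |deriv (deriv (fun t => ∑ k : Fin D, αc k * Real.exp (-γ * (g t - d k) ^ 2))) z| ≤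
        2 * D * α * γ * ((1 + 2 * γ * (X + R) ^ 2) * Y ^ 2 + (X + R) * Z) := by
  change (∀ᶠ t in 𝓝 z, DifferentiableAt ℝ (kaf γ d αc ∘ g) t) ∧
    DifferentiableAt ℝ (deriv (kaf γ d αc ∘ g)) z ∧ |deriv (deriv (kaf γ d αc ∘ g)) z| ≤ _
  have hF' := eventually_hasDerivAt_comp (hasDerivAt_kaf γ d αc) hg
  have hF'' := hasDerivAt_deriv_comp (hasDerivAt_kaf γ d αc) (hasDerivAt_kafDeriv γ d αc (g z)) hg hg2
  refine ⟨hF'.mono fun t ht => ht.differentiableAt, hF''.differentiableAt, ?_⟩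
  have ha1 := abs_kafDeriv_le hγ hgz hd hαc
  have ha2 := abs_kafDeriv2_le hγ hgz hd hαc
  rw [Fintype.card_fin] at ha1 ha2
  have hsq : deriv g z ^ 2 ≤ Y ^ 2 := sq_le_sq' (abs_le.mp hg').1 (abs_le.mp hg').2
  rw [hF''.deriv]
  calc |kafDeriv2 γ d αc (g z) * deriv g z ^ 2 + kafDeriv γ d αc (g z) * deriv (deriv g) z|
        ≤ |kafDeriv2 γ d αc (g z)| * deriv g z ^ 2 +
            |kafDeriv γ d αc (g z)| * |deriv (deriv g) z| := by
        refine (abs_add_le _ _).trans_eq ?_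
        rw [abs_mul, abs_mul, abs_pow, sq_abs]
    _ ≤ D * α * (2 * γ * (1 + 2 * γ * (X + R) ^ 2)) * Y ^ 2 + D * α * (2 * γ * (X + R)) * Z :=
        add_le_add (mul_le_mul ha2 hsq (sq_nonneg _) ((abs_nonneg _).trans ha2))
          (mul_le_mul ha1 hg'' (abs_nonneg _) ((abs_nonneg _).trans ha1))
    _ = _ := by ring

/-- **Second derivative bound for a KAF composed with a scalar pre-activation.**
If `g` is differentiable on a neighborhood of `z` and twice differentiable at
`z`, with `|g(z)| ≤ X`, `|g'(z)| ≤ Y`, `|g''(z)| ≤ Z`, dictionary elements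
`|d_k| ≤ R` and mixing coefficients `|α_k| ≤ α`, then
`F(t) = Σ_k α_k exp(−γ(g(t)−d_k)²)` is twice differentiable at `z` with
`|F''(z)| ≤ 2Dαγ[(1 + 2γ(X+R)²)Y² + (X+R)Z]`. -/
theorem kaf_comp_second_deriv_bound (D : ℕ) (g : ℝ → ℝ) (z γ X Y Z R α : ℝ)
    (d αc : Fin D → ℝ)
    (hγ : 0 ≤ γ) (hX : 0 ≤ X) (hY : 0 ≤ Y) (hZ : 0 ≤ Z) (hR : 0 ≤ R) (hα : 0 ≤ α)
    (hg : ∀ᶠ t in nhds z, DifferentiableAt ℝ g t)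
    (hg2 : DifferentiableAt ℝ (deriv g) z)
    (hgz : |g z| ≤ X) (hg' : |deriv g z| ≤ Y) (hg'' : |deriv (deriv g) z| ≤ Z)
    (hd : ∀ k, |d k| ≤ R) (hαc : ∀ k, |αc k| ≤ α) :
    (∀ᶠ t in nhds z, DifferentiableAt ℝ
        (fun t => ∑ k : Fin D, αc k * Real.exp (-γ * (g t - d k) ^ 2)) t) ∧
      DifferentiableAt ℝ
        (deriv (fun t => ∑ k : Fin D, αc k * Real.exp (-γ * (g t - d k) ^ 2))) z ∧
      |deriv (deriv (fun t => ∑ k : Fin D, αc k * Real.exp (-γ * (g t - d k) ^ 2))) z| ≤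
        2 * D * α * γ * ((1 + 2 * γ * (X + R) ^ 2) * Y ^ 2 + (X + R) * Z) :=
  kaf_comp_second_deriv_bound_general D g z γ X Y Z R α d αc hγ hg hg2 hgz hg' hg'' hd hαc
end

section
/- Let a, W, b, α, c ≥ 1 be constants. Then there exists a constant C ≥ 1, depending only on a, W, b, α, c, with the following property. For all reals H ≥ 1 and γ > 0 with γ·H² ≥ 1, all D with 1 ≤ D ≤ H, all R with 0 ≤ R ≤ c·H, and all sequences (X_i), (Y_i), (Z_i) of nonnegative reals satisfying: X_1 ≤ H·W·a + b and X_i ≤ H·W·D·α + b for i ≥ 2; Y_1 ≤ max{1, a} and Y_i ≤ max{ D·α, 1, 2·H·W·D·α·γ·(X_{i−1} + R)·Y_{i−1} } for i ≥ 2; Z_1 = 0 and, for i ≥ 2, Z_i ≤ max{ 1, 2·D·α·γ·(X_{i−1} + R)·Y_{i−1}, 2·H·W·γ·(X_{i−1} + R)·Y_{i−1}, 2·H·W·D·α·γ·[ (1 + 2γ(X_{i−1} + R)²)·Y_{i−1}² + (X_{i−1} + R)·Z_{i−1} ] }; it holds that Z_i ≤ C^{i} · (γ·H²)² · (γ·H⁴)^{2(i−2)}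 for every i ≥ 2. -/
private lemma kafnet_one_le_pow {x : ℝ} (h : 1 ≤ x) (n : ℕ) : 1 ≤ x ^ n := by
  induction n with
  | zero => simp
  | succ n ih => rw [pow_succ]; nlinarith

private lemma kafnet_one_le_mul {x y : ℝ} (hx : 1 ≤ x) (hy : 1 ≤ y) : 1 ≤ x * y := by nlinarith

private lemma kafnet_pow_facts {γ H : ℝ} (hγ : 0 ≤ γ) (hH : 1 ≤ H) (hg : 1 ≤ γ*H^2) :
    1 ≤ H^2 ∧ 1 ≤ γ*H^4 ∧ γ*H^2 ≤ (γ*H^2)^2 ∧ γ*H^2 ≤ (γ*H^2)^2*H^2 ∧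
    H ≤ γ*H^3 ∧ 1 ≤ γ*H^3 ∧ H^2 ≤ γ*H^4 ∧ H ≤ γ*H^4 := by
  have hH0 : (0:ℝ) < H := by linarith
  have hH2 : (1:ℝ) ≤ H^2 := by nlinarith
  have hP1 : (1:ℝ) ≤ γ*H^4 := by
    nlinarith [mul_nonneg (mul_nonneg hγ (sq_nonneg H)) (sub_nonneg.mpr hH2)]
  have hgsq : γ*H^2 ≤ (γ*H^2)^2 := by nlinarith [sq_nonneg (γ*H^2 - 1)]
  have hgg : γ*H^2 ≤ (γ*H^2)^2*H^2 := by
    nlinarith [mul_nonneg (sq_nonneg (γ*H^2)) (sub_nonneg.mpr hH2)]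
  have hHγ3 : H ≤ γ*H^3 := by nlinarith [mul_nonneg hH0.le (sub_nonneg.mpr hg)]
  have hγH31 : (1:ℝ) ≤ γ*H^3 := by
    nlinarith [mul_nonneg (mul_nonneg hγ (sq_nonneg H)) (sub_nonneg.mpr hH)]
  have hH2P : H^2 ≤ γ*H^4 := by nlinarith [mul_nonneg (sq_nonneg H) (sub_nonneg.mpr hg)]
  have hHP : H ≤ γ*H^4 := by nlinarith
  exact ⟨hH2, hP1, hgsq, hgg, hHγ3, hγH31, hH2P, hHP⟩

private lemma kafnet_XR1 {a W b α c H R x : ℝ} (ha : 1 ≤ a) (hW : 1 ≤ W) (hb : 1 ≤ b)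
    (hα : 1 ≤ α) (hc : 1 ≤ c) (hH : 1 ≤ H) (hx : x ≤ H*W*a + b) (hR : R ≤ c*H) :
    x + R ≤ (W*a + W*α + b + c)*H := by
  nlinarith [mul_nonneg (mul_nonneg (by linarith : (0:ℝ) ≤ W) (by linarith : (0:ℝ) ≤ α))
      (by linarith : (0:ℝ) ≤ H),
    mul_nonneg (by linarith : (0:ℝ) ≤ b) (by linarith : (0:ℝ) ≤ H - 1)]

private lemma kafnet_XR2 {a W b α c H D R x : ℝ} (ha : 1 ≤ a) (hW : 1 ≤ W) (hb : 1 ≤ b)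
    (hα : 1 ≤ α) (hc : 1 ≤ c) (hH : 1 ≤ H) (hD : D ≤ H)
    (hx : x ≤ H*W*D*α + b) (hR : R ≤ c*H) :
    x + R ≤ (W*a + W*α + b + c)*H^2 := by
  have hH2 : (1:ℝ) ≤ H^2 := by nlinarith
  nlinarith [mul_le_mul_of_nonneg_left hD
      (mul_nonneg (mul_nonneg (by linarith : (0:ℝ) ≤ H) (by linarith : (0:ℝ) ≤ W))
        (by linarith : (0:ℝ) ≤ α)),
    mul_nonneg (by linarith : (0:ℝ) ≤ b) (by linarith : (0:ℝ) ≤ H^2 - 1),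
    mul_nonneg (by linarith : (0:ℝ) ≤ c) (by nlinarith : (0:ℝ) ≤ H^2 - H),
    mul_nonneg (mul_nonneg (by linarith : (0:ℝ) ≤ W) (by linarith : (0:ℝ) ≤ a)) (sq_nonneg H)]

set_option maxHeartbeats 2000000 in
/-- **Asymptotic bound on the second-derivative bounds of Kafnet pre-activations.**
There is a constant `C` depending only on the problem constants `a, W, b, α, c`
such that any sequences `(X_i), (Y_i), (Z_i)` of layer-wise value / first- /
second-derivative bounds satisfying the Kafnet recursive inequalities obey
`Z_i ≤ C^i (γH²)² (γH⁴)^(2(i−2))` for all `i ≥ 2`. -/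
theorem kafnet_second_deriv_asymptotic_bound
    (a W b α c : ℝ) (ha : 1 ≤ a) (hW : 1 ≤ W) (hb : 1 ≤ b) (hα : 1 ≤ α) (hc : 1 ≤ c) :
    ∃ C : ℝ, 1 ≤ C ∧
      ∀ (H γ D R : ℝ) (X Y Z : ℕ → ℝ),
        1 ≤ H → 0 < γ → 1 ≤ γ * H ^ 2 →
        1 ≤ D → D ≤ H → 0 ≤ R → R ≤ c * H →
        (∀ i, 0 ≤ X i) → (∀ i, 0 ≤ Y i) → (∀ i, 0 ≤ Z i) →
        X 1 ≤ H * W * a + b →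
        (∀ i, 2 ≤ i → X i ≤ H * W * D * α + b) →
        Y 1 ≤ max 1 a →
        (∀ i, 2 ≤ i →
          Y i ≤ max (D * α) (max 1
            (2 * H * W * D * α * γ * (X (i - 1) + R) * Y (i - 1)))) →
        Z 1 = 0 →
        (∀ i, 2 ≤ i →
          Z i ≤ max 1 (max
            (2 * D * α * γ * (X (i - 1) + R) * Y (i - 1)) (max
            (2 * H * W * γ * (X (i - 1) + R) * Y (i - 1))
            (2 * H * W * D * α * γ *
              ((1 + 2 * γ * (X (i - 1) + R) ^ 2) * Y (i - 1) ^ 2 +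
                (X (i - 1) + R) * Z (i - 1)))))) →
        ∀ i, 2 ≤ i →
          Z i ≤ C ^ i * (γ * H ^ 2) ^ 2 * (γ * H ^ 4) ^ (2 * (i - 2)) := by
  have hW0 : (0:ℝ) < W := by linarith
  have ha0 : (0:ℝ) < a := by linarith
  have hb0 : (0:ℝ) < b := by linarith
  have hα0 : (0:ℝ) < α := by linarith
  have hc0 : (0:ℝ) < c := by linarith
  obtain ⟨K, hKdef⟩ : ∃ x : ℝ, x = W*a + W*α + b + c := ⟨_, rfl⟩
  have hK1 : 1 ≤ K := by rw [hKdef]; nlinarith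
  have hK0 : (0:ℝ) < K := by linarith
  obtain ⟨M, hMdef⟩ : ∃ x : ℝ, x = 2*W*K*α + α := ⟨_, rfl⟩
  have h2WKα : 2*W*K*α ≤ M := by rw [hMdef]; nlinarith
  have hαM : α ≤ M := by
    rw [hMdef]; nlinarith [mul_nonneg (mul_nonneg hW0.le hK0.le) hα0.le]
  have hM1 : 1 ≤ M := by
    rw [hMdef]; nlinarith [mul_nonneg (mul_nonneg hW0.le hK0.le) hα0.le]
  have hM0 : (0:ℝ) < M := by linarith
  obtain ⟨C, hCdef⟩ : ∃ x : ℝ,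
      x = M^2 + 8*W*α*K^2*a^2 + 8*W*α*a^2 + 8*W*α*K + 8*α*K*a + 8*W*K*a + 8 := ⟨_, rfl⟩
  have n1 : (0:ℝ) ≤ W*α*K^2*a^2 := by positivity
  have n2 : (0:ℝ) ≤ W*α*a^2 := by positivity
  have n3 : (0:ℝ) ≤ W*α*K := by positivity
  have n4 : (0:ℝ) ≤ α*K*a := by positivity
  have n5 : (0:ℝ) ≤ W*K*a := by positivity
  have hM2M : M ≤ M^2 := by nlinarith [mul_nonneg hM0.le (by linarith : (0:ℝ) ≤ M - 1)]
  have hC1 : 1 ≤ C := by rw [hCdef]; linarith [sq_nonneg M, n1, n2, n3, n4, n5]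
  have hC0 : (0:ℝ) < C := by linarith
  have hMC : M ≤ C := by rw [hCdef]; linarith [hM2M, n1, n2, n3, n4, n5]
  have hM2C : M^2 ≤ C := by rw [hCdef]; linarith [n1, n2, n3, n4, n5]
  have h2αKa : 2*K*α*a ≤ C := by rw [hCdef]; linarith [sq_nonneg M, n1, n2, n3, n4, n5]
  have h2WKa : 2*K*W*a ≤ C := by rw [hCdef]; linarith [sq_nonneg M, n1, n2, n3, n4, n5]
  have hbase4 : 2*W*α*a^2 + 4*W*α*K^2*a^2 ≤ C := by
    rw [hCdef]; linarith [sq_nonneg M, n1, n2, n3, n4, n5]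
  have hAC : 2*(2*W*α*a^2 + 4*W*α*K^2*a^2) ≤ C := by
    rw [hCdef]; linarith [sq_nonneg M, n1, n2, n3, n4, n5]
  have hBC : 2*(2*W*α*K) ≤ C := by
    rw [hCdef]; linarith [sq_nonneg M, n1, n2, n3, n4, n5]
  have hCC : C ≤ C^2 := by nlinarith [mul_nonneg hC0.le (by linarith : (0:ℝ) ≤ C - 1)]
  have hαaM : α ≤ a*M := by nlinarith [mul_nonneg (sub_nonneg.mpr ha) hM0.le]
  refine ⟨C, hC1, ?_⟩
  intro H γ D R X Y Z hH hγ hg hD1 hDH hR0 hRc hX0 hY0 hZ0 hX1 hXr hY1 hYr hZ1 hZr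
  have hH0 : (0:ℝ) < H := by linarith
  have hγ0 : (0:ℝ) ≤ γ := hγ.le
  have hD0 : (0:ℝ) < D := by linarith
  obtain ⟨hH2, hP1, hgsq, hgg, hHγ3, hγH31, hH2P, hHP⟩ := kafnet_pow_facts hγ0 hH hg
  have hMP1 : (1:ℝ) ≤ M*(γ*H^4) := kafnet_one_le_mul hM1 hP1
  have hY1a : Y 1 ≤ a := hY1.trans (max_le ha le_rfl)
  have hx1 : (0:ℝ) ≤ X 1 := hX0 1
  have hy1 : (0:ℝ) ≤ Y 1 := hY0 1
  -- bounds on X i + R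
  have hXR1 : X 1 + R ≤ K*H := by
    rw [hKdef]; exact kafnet_XR1 ha hW hb hα hc hH hX1 hRc
  have hXR2 : ∀ n : ℕ, X (n+2) + R ≤ K*H^2 := by
    intro n
    rw [hKdef]; exact kafnet_XR2 ha hW hb hα hc hH hDH (hXr (n+2) (by omega)) hRc
  -- bound on Y
  have hYb : ∀ n : ℕ, Y (n+2) * H ≤ a * (M*(γ*H^4))^(n+1) := by
    intro n
    induction n with
    | zero =>
      have h := hYr 2 (by omega)
      simp only [show (2:ℕ)-1 = 1 by omega] at h
      have hb1 : D*α ≤ a*M*(γ*H^3) := by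
        calc D*α ≤ H*α := by gcongr
          _ ≤ (γ*H^3)*α := mul_le_mul_of_nonneg_right hHγ3 hα0.le
          _ ≤ (γ*H^3)*(a*M) := mul_le_mul_of_nonneg_left hαaM (by positivity)
          _ = a*M*(γ*H^3) := by ring
      have hb2 : (1:ℝ) ≤ a*M*(γ*H^3) :=
        kafnet_one_le_mul (kafnet_one_le_mul ha hM1) hγH31
      have hb3 : 2*H*W*D*α*γ*(X 1+R)*Y 1 ≤ a*M*(γ*H^3) := by
        calc 2*H*W*D*α*γ*(X 1+R)*Y 1 = (2*W*α*γ*H)*(D*((X 1+R)*Y 1)) := by ring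
          _ ≤ (2*W*α*γ*H)*(H*((K*H)*a)) := by gcongr
          _ = (2*W*K*α)*(a*(γ*H^3)) := by ring
          _ ≤ M*(a*(γ*H^3)) := mul_le_mul_of_nonneg_right h2WKα (by positivity)
          _ = a*M*(γ*H^3) := by ring
      calc Y (0+2) * H ≤ (a*M*(γ*H^3))*H :=
            mul_le_mul_of_nonneg_right (h.trans (max_le hb1 (max_le hb2 hb3))) hH0.le
        _ = a*(M*(γ*H^4))^(0+1) := by ring
    | succ n ih =>
      have h := hYr (n+3) (by omega)
      simp only [show n+3-1 = n+2 by omega] at h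
      have hxn : (0:ℝ) ≤ X (n+2) := hX0 _
      have hyn : (0:ℝ) ≤ Y (n+2) := hY0 _
      have hXRn := hXR2 n
      have hb1 : D*α*H ≤ a*(M*(γ*H^4))^(n+2) := by
        calc D*α*H ≤ H*α*H := by gcongr
          _ = α*H^2 := by ring
          _ ≤ M*(γ*H^4) := mul_le_mul hαM hH2P (by positivity) hM0.le
          _ = (M*(γ*H^4))^1 := (pow_one _).symm
          _ ≤ (M*(γ*H^4))^(n+2) := pow_le_pow_right₀ hMP1 (by omega)
          _ ≤ a*(M*(γ*H^4))^(n+2) := le_mul_of_one_le_left (by positivity) ha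
      have hb2 : (1:ℝ)*H ≤ a*(M*(γ*H^4))^(n+2) := by
        calc (1:ℝ)*H = H := one_mul H
          _ ≤ γ*H^4 := hHP
          _ ≤ M*(γ*H^4) := le_mul_of_one_le_left (by positivity) hM1
          _ = (M*(γ*H^4))^1 := (pow_one _).symm
          _ ≤ (M*(γ*H^4))^(n+2) := pow_le_pow_right₀ hMP1 (by omega)
          _ ≤ a*(M*(γ*H^4))^(n+2) := le_mul_of_one_le_left (by positivity) ha
      have hb3 : 2*H*W*D*α*γ*(X (n+2)+R)*Y (n+2)*H ≤ a*(M*(γ*H^4))^(n+2) := by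
        calc 2*H*W*D*α*γ*(X (n+2)+R)*Y (n+2)*H
            = (2*W*α*γ*H)*(D*((X (n+2)+R)*(Y (n+2)*H))) := by ring
          _ ≤ (2*W*α*γ*H)*(H*((K*H^2)*(a*(M*(γ*H^4))^(n+1)))) := by gcongr
          _ = (2*W*K*α)*((γ*H^4)*(a*(M*(γ*H^4))^(n+1))) := by ring
          _ ≤ M*((γ*H^4)*(a*(M*(γ*H^4))^(n+1))) :=
              mul_le_mul_of_nonneg_right h2WKα (by positivity)
          _ = a*(M*(γ*H^4))^(n+2) := by ring
      have key : (max (D*α) (max 1 (2*H*W*D*α*γ*(X (n+2)+R)*Y (n+2))))*H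
          ≤ a*(M*(γ*H^4))^(n+2) := by
        rw [max_mul_of_nonneg _ _ hH0.le, max_mul_of_nonneg _ _ hH0.le]
        exact max_le hb1 (max_le hb2 hb3)
      calc Y (n+1+2) * H ≤ (max (D*α) (max 1 (2*H*W*D*α*γ*(X (n+2)+R)*Y (n+2))))*H :=
            mul_le_mul_of_nonneg_right h hH0.le
        _ ≤ a*(M*(γ*H^4))^(n+2) := key
  -- bound on Z
  have hZb : ∀ n : ℕ, Z (n+2) ≤ C^(n+2) * (γ*H^2)^2 * (γ*H^4)^(2*n) := by
    intro n
    induction n with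
    | zero =>
      have h := hZr 2 (by omega)
      simp only [show (2:ℕ)-1 = 1 by omega, hZ1, mul_zero, add_zero] at h
      have g1 : (1:ℝ) ≤ C^2*(γ*H^2)^2 :=
        kafnet_one_le_mul (kafnet_one_le_pow hC1 2) (kafnet_one_le_pow hg 2)
      have g2 : 2*D*α*γ*(X 1+R)*Y 1 ≤ C^2*(γ*H^2)^2 := by
        calc 2*D*α*γ*(X 1+R)*Y 1 = (2*α*γ)*(D*((X 1+R)*Y 1)) := by ring
          _ ≤ (2*α*γ)*(H*((K*H)*a)) := by gcongr
          _ = (2*K*α*a)*(γ*H^2) := by ring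
          _ ≤ C*(γ*H^2)^2 := mul_le_mul h2αKa hgsq (by positivity) hC0.le
          _ ≤ C^2*(γ*H^2)^2 := mul_le_mul_of_nonneg_right hCC (by positivity)
      have g3 : 2*H*W*γ*(X 1+R)*Y 1 ≤ C^2*(γ*H^2)^2 := by
        calc 2*H*W*γ*(X 1+R)*Y 1 = (2*W*γ*H)*((X 1+R)*Y 1) := by ring
          _ ≤ (2*W*γ*H)*((K*H)*a) := by gcongr
          _ = (2*K*W*a)*(γ*H^2) := by ring
          _ ≤ C*(γ*H^2)^2 := mul_le_mul h2WKa hgsq (by positivity) hC0.le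
          _ ≤ C^2*(γ*H^2)^2 := mul_le_mul_of_nonneg_right hCC (by positivity)
      have g4 : 2*H*W*D*α*γ*((1+2*γ*(X 1+R)^2)*Y 1^2) ≤ C^2*(γ*H^2)^2 := by
        calc 2*H*W*D*α*γ*((1+2*γ*(X 1+R)^2)*Y 1^2)
            = (2*W*α*γ)*(H*(D*((1+2*γ*(X 1+R)^2)*Y 1^2))) := by ring
          _ ≤ (2*W*α*γ)*(H*(H*((1+2*γ*(K*H)^2)*a^2))) := by gcongr
          _ = (2*W*α*a^2)*(γ*H^2) + (4*W*α*K^2*a^2)*((γ*H^2)^2) := by ring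
          _ ≤ (2*W*α*a^2)*((γ*H^2)^2) + (4*W*α*K^2*a^2)*((γ*H^2)^2) := by gcongr
          _ = (2*W*α*a^2 + 4*W*α*K^2*a^2)*((γ*H^2)^2) := by ring
          _ ≤ C*((γ*H^2)^2) := mul_le_mul_of_nonneg_right hbase4 (by positivity)
          _ ≤ C^2*(γ*H^2)^2 := mul_le_mul_of_nonneg_right hCC (by positivity)
      calc Z (0+2) ≤ _ := h
        _ ≤ C^2*(γ*H^2)^2 := max_le g1 (max_le g2 (max_le g3 g4))
        _ = C^(0+2)*(γ*H^2)^2*(γ*H^4)^(2*0) := by ring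
    | succ n ih =>
      have h := hZr (n+3) (by omega)
      simp only [show n+3-1 = n+2 by omega] at h
      have hxn : (0:ℝ) ≤ X (n+2) := hX0 _
      have hyn : (0:ℝ) ≤ Y (n+2) := hY0 _
      have hzn : (0:ℝ) ≤ Z (n+2) := hZ0 _
      have hXRn := hXR2 n
      have hYn := hYb n
      have hPle : (γ*H^4)^(2*n+1) ≤ (γ*H^4)^(2*n+2) := pow_le_pow_right₀ hP1 (by omega)
      have hPle2 : (γ*H^4)^(n+1) ≤ (γ*H^4)^(2*(n+1)) := pow_le_pow_right₀ hP1 (by omega)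
      have g1 : (1:ℝ) ≤ C^(n+3)*(γ*H^2)^2*(γ*H^4)^(2*(n+1)) :=
        kafnet_one_le_mul (kafnet_one_le_mul (kafnet_one_le_pow hC1 _)
          (kafnet_one_le_pow hg 2)) (kafnet_one_le_pow hP1 _)
      have hc2 : 2*K*α*a*M^(n+1) ≤ C^(n+2) := by
        calc 2*K*α*a*M^(n+1) = (2*K*α*a)*M^(n+1) := by ring
          _ ≤ C*C^(n+1) := mul_le_mul h2αKa (pow_le_pow_left₀ hM0.le hMC _)
              (by positivity) hC0.le
          _ = C^(n+2) := by ring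
      have hc3 : 2*K*W*a*M^(n+1) ≤ C^(n+2) := by
        calc 2*K*W*a*M^(n+1) = (2*K*W*a)*M^(n+1) := by ring
          _ ≤ C*C^(n+1) := mul_le_mul h2WKa (pow_le_pow_left₀ hM0.le hMC _)
              (by positivity) hC0.le
          _ = C^(n+2) := by ring
      have hCstep : C^(n+2) ≤ C^(n+3) := pow_le_pow_right₀ hC1 (by omega)
      have hgle : (γ*H^2)*(γ*H^4)^(n+1) ≤ (γ*H^2)^2*(γ*H^4)^(2*(n+1)) :=
        mul_le_mul hgsq hPle2 (by positivity) (by positivity)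
      have g2 : 2*D*α*γ*(X (n+2)+R)*Y (n+2) ≤ C^(n+3)*(γ*H^2)^2*(γ*H^4)^(2*(n+1)) := by
        refine le_of_mul_le_mul_right ?_ hH0
        calc 2*D*α*γ*(X (n+2)+R)*Y (n+2)*H
            = (2*α*γ)*(D*((X (n+2)+R)*(Y (n+2)*H))) := by ring
          _ ≤ (2*α*γ)*(H*((K*H^2)*(a*(M*(γ*H^4))^(n+1)))) := by gcongr
          _ = (2*K*α*a*M^(n+1))*((γ*H^2)*(γ*H^4)^(n+1))*H := by ring
          _ ≤ (C^(n+2))*((γ*H^2)^2*(γ*H^4)^(2*(n+1)))*H := by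
              refine mul_le_mul_of_nonneg_right ?_ hH0.le
              exact mul_le_mul hc2 hgle (by positivity) (by positivity)
          _ ≤ (C^(n+3))*((γ*H^2)^2*(γ*H^4)^(2*(n+1)))*H := by
              refine mul_le_mul_of_nonneg_right
                (mul_le_mul_of_nonneg_right hCstep (by positivity)) hH0.le
          _ = C^(n+3)*(γ*H^2)^2*(γ*H^4)^(2*(n+1))*H := by ring
      have g3 : 2*H*W*γ*(X (n+2)+R)*Y (n+2) ≤ C^(n+3)*(γ*H^2)^2*(γ*H^4)^(2*(n+1)) := by
        refine le_of_mul_le_mul_right ?_ hH0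
        calc 2*H*W*γ*(X (n+2)+R)*Y (n+2)*H
            = (2*W*γ*H)*((X (n+2)+R)*(Y (n+2)*H)) := by ring
          _ ≤ (2*W*γ*H)*((K*H^2)*(a*(M*(γ*H^4))^(n+1))) := by gcongr
          _ = (2*K*W*a*M^(n+1))*((γ*H^2)*(γ*H^4)^(n+1))*H := by ring
          _ ≤ (C^(n+2))*((γ*H^2)^2*(γ*H^4)^(2*(n+1)))*H := by
              refine mul_le_mul_of_nonneg_right ?_ hH0.le
              exact mul_le_mul hc3 hgle (by positivity) (by positivity)
          _ ≤ (C^(n+3))*((γ*H^2)^2*(γ*H^4)^(2*(n+1)))*H := by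
              refine mul_le_mul_of_nonneg_right
                (mul_le_mul_of_nonneg_right hCstep (by positivity)) hH0.le
          _ = C^(n+3)*(γ*H^2)^2*(γ*H^4)^(2*(n+1))*H := by ring
      have hcoef : (2*W*α*a^2 + 4*W*α*K^2*a^2)*M^(2*n+2) + 2*W*α*K*C^(n+2) ≤ C^(n+3) := by
        have t1 : M^(2*n+2) ≤ C^(n+1) := by
          calc M^(2*n+2) = (M^2)^(n+1) := by ring
            _ ≤ C^(n+1) := pow_le_pow_left₀ (by positivity) hM2C _
        have t2 : (2*W*α*a^2 + 4*W*α*K^2*a^2)*M^(2*n+2)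
            ≤ (2*W*α*a^2 + 4*W*α*K^2*a^2)*C^(n+1) :=
          mul_le_mul_of_nonneg_left t1 (by positivity)
        have t3 : (2*(2*W*α*a^2 + 4*W*α*K^2*a^2))*C^(n+1) ≤ C^(n+2) := by
          calc (2*(2*W*α*a^2 + 4*W*α*K^2*a^2))*C^(n+1) ≤ C*C^(n+1) :=
                mul_le_mul_of_nonneg_right hAC (by positivity)
            _ = C^(n+2) := by ring
        have t4 : (2*(2*W*α*K))*C^(n+2) ≤ C^(n+3) := by
          calc (2*(2*W*α*K))*C^(n+2) ≤ C*C^(n+2) :=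
                mul_le_mul_of_nonneg_right hBC (by positivity)
            _ = C^(n+3) := by ring
        have t5 : C^(n+2) ≤ C^(n+3) := hCstep
        linarith
      have g4 : 2*H*W*D*α*γ*((1+2*γ*(X (n+2)+R)^2)*Y (n+2)^2 + (X (n+2)+R)*Z (n+2))
          ≤ C^(n+3)*(γ*H^2)^2*(γ*H^4)^(2*(n+1)) := by
        refine le_of_mul_le_mul_right ?_ (show (0:ℝ) < H^2 by positivity)
        calc 2*H*W*D*α*γ*((1+2*γ*(X (n+2)+R)^2)*Y (n+2)^2 + (X (n+2)+R)*Z (n+2))*H^2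
            = (2*W*α*γ)*(H*(D*((1+2*γ*(X (n+2)+R)^2)*(Y (n+2)*H)^2
                + (X (n+2)+R)*(Z (n+2)*H^2)))) := by ring
          _ ≤ (2*W*α*γ)*(H*(H*((1+2*γ*(K*H^2)^2)*(a*(M*(γ*H^4))^(n+1))^2
                + (K*H^2)*((C^(n+2)*(γ*H^2)^2*(γ*H^4)^(2*n))*H^2)))) := by gcongr
          _ = (2*W*α*a^2*M^(2*n+2))*((γ*H^2)*(γ*H^4)^(2*n+2))
              + (4*W*α*K^2*a^2*M^(2*n+2))*((γ*H^2)^2*H^2*(γ*H^4)^(2*n+2))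
              + (2*W*α*K*C^(n+2))*((γ*H^2)^2*H^2*(γ*H^4)^(2*n+1)) := by ring
          _ ≤ (2*W*α*a^2*M^(2*n+2))*((γ*H^2)^2*H^2*(γ*H^4)^(2*n+2))
              + (4*W*α*K^2*a^2*M^(2*n+2))*((γ*H^2)^2*H^2*(γ*H^4)^(2*n+2))
              + (2*W*α*K*C^(n+2))*((γ*H^2)^2*H^2*(γ*H^4)^(2*n+2)) := by gcongr
          _ = ((2*W*α*a^2 + 4*W*α*K^2*a^2)*M^(2*n+2) + 2*W*α*K*C^(n+2))
              *((γ*H^2)^2*H^2*(γ*H^4)^(2*n+2)) := by ring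
          _ ≤ (C^(n+3))*((γ*H^2)^2*H^2*(γ*H^4)^(2*n+2)) :=
              mul_le_mul_of_nonneg_right hcoef (by positivity)
          _ = C^(n+3)*(γ*H^2)^2*(γ*H^4)^(2*(n+1))*H^2 := by ring
      calc Z (n+1+2) ≤ _ := h
        _ ≤ C^(n+3)*(γ*H^2)^2*(γ*H^4)^(2*(n+1)) := max_le g1 (max_le g2 (max_le g3 g4))
        _ = C^(n+1+2)*(γ*H^2)^2*(γ*H^4)^(2*(n+1)) := by norm_num
  intro i hi
  obtain ⟨k, rfl⟩ : ∃ k, i = k + 2 := ⟨i - 2, by omega⟩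
  simpa using hZb k
end
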